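/- arXiv:1511.07949 — 10 statements merged into one kernel-verified Lean document; each statement's English description precedes it below -/
import Mathlib

section
/- Let A and B be finite nonempty types and let p be a probability mass function on A × B (nonnegative, summing to 1). Let p_A(a) = Σ_b p(a,b), p_B(b) = Σ_a p(a,b), and for a with p_A(a) > 0 let p_{B|A}(b|a) = p(a,b)/p_A(a). Then the Shannon mutual information I(A;B) = Σ_{(a,b): p(a,b)>0} p(a,b) · log₂( p(a,b) / (p_A(a)·p_B(b)) ) satisfies I(A;B) ≤ log₂( Σ_{b} max_{a : p_A(a)>0} p_{B|A}(b|a) ). -/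
/-!
For `p(a,b) > 0` we have `p(a,b) / p_A(a) ≤ M(b) := max_a p_{B|A}(b|a)`, so each term of `I(A;B)`
is at most `p(a,b) log₂ (M(b) / p_B(b))`. Summing over `a` leaves
`∑_b p_B(b) log₂ (M(b) / p_B(b))`, which Jensen's inequality for the concave logarithm bounds by
`log₂ ∑_b M(b)`.
-/

open Finset Real

theorem sum_mul_log_div_le_log_sum {ι : Type*} {s : Finset ι} {w x : ι → ℝ}
    (hw : ∀ i ∈ s, 0 ≤ w i) (hw1 : ∑ i ∈ s, w i = 1) (hx : ∀ i ∈ s, 0 ≤ x i)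
    (hwx : ∀ i ∈ s, 0 < w i → 0 < x i) :
    ∑ i ∈ s, w i * log (x i / w i) ≤ log (∑ i ∈ s, x i) := by
  classical
  set t := s.filter fun i => 0 < w i
  have ht : ∀ i ∈ t, 0 < w i ∧ 0 < x i := fun i hi =>
    have hi := mem_filter.1 hi
    ⟨hi.2, hwx i hi.1 hi.2⟩
  have hwt : ∑ i ∈ t, w i = 1 := by
    rw [sum_filter_of_ne fun i hi hne => (hw i hi).lt_of_ne' hne, hw1]
  have hxt : 0 < ∑ i ∈ t, x i :=
    sum_pos (fun i hi => (ht i hi).2) (nonempty_of_sum_ne_zero (by rw [hwt]; exact one_ne_zero))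
  calc ∑ i ∈ s, w i * log (x i / w i)
      = ∑ i ∈ t, w i • log (x i / w i) :=
        (sum_filter_of_ne fun i hi hne => (hw i hi).lt_of_ne' (left_ne_zero_of_mul hne)).symm
    _ ≤ log (∑ i ∈ t, w i • (x i / w i)) :=
        strictConcaveOn_log_Ioi.concaveOn.le_map_sum (fun i hi => (ht i hi).1.le) hwt
          fun i hi => div_pos (ht i hi).2 (ht i hi).1
    _ = log (∑ i ∈ t, x i) :=
        congrArg log (sum_congr rfl fun i hi => mul_div_cancel₀ _ (ht i hi).1.ne')
    _ ≤ log (∑ i ∈ s, x i) :=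
        log_le_log hxt (sum_le_sum_of_subset_of_nonneg (filter_subset _ _) fun i hi _ => hx i hi)

theorem sum_mul_logb_div_le_logb_sum {ι : Type*} {s : Finset ι} {w x : ι → ℝ} {c : ℝ}
    (hc : 1 < c) (hw : ∀ i ∈ s, 0 ≤ w i) (hw1 : ∑ i ∈ s, w i = 1)
    (hx : ∀ i ∈ s, 0 ≤ x i) (hwx : ∀ i ∈ s, 0 < w i → 0 < x i) :
    ∑ i ∈ s, w i * logb c (x i / w i) ≤ logb c (∑ i ∈ s, x i) := by
  simp only [logb, ← mul_div_assoc, ← sum_div]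
  exact div_le_div_of_nonneg_right (sum_mul_log_div_le_log_sum hw hw1 hx hwx)
    (log_nonneg hc.le)

theorem ite_mul_logb_div_mul_le {c p q r m : ℝ} (hc : 1 < c) (hp : 0 ≤ p) (hpq : p ≤ q)
    (hpr : p ≤ r) (hm : 0 < q → p / q ≤ m) :
    (if 0 < p then p * logb c (p / (q * r)) else 0) ≤ p * logb c (m / r) := by
  split_ifs with h
  · have hq : 0 < q := h.trans_le hpq
    have hr : 0 < r := h.trans_le hpr
    have hle : p / (q * r) ≤ m / r := by
      rw [← div_div]
      exact div_le_div_of_nonneg_right (hm hq) hr.le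
    exact mul_le_mul_of_nonneg_left (logb_le_logb_of_le hc (by positivity) hle) hp
  · simp [le_antisymm (not_lt.1 h) hp]

theorem sum_ite_mul_logb_le_sum_mul_logb {A B : Type*} [Fintype A] [Fintype B] {c : ℝ}
    (hc : 1 < c) {p : A → B → ℝ} (hp0 : ∀ a b, 0 ≤ p a b) {M : B → ℝ}
    (hM : ∀ a b, 0 < ∑ b', p a b' → p a b / ∑ b', p a b' ≤ M b) :
    (∑ a, ∑ b, if 0 < p a b then
        p a b * logb c (p a b / ((∑ b', p a b') * ∑ a', p a' b)) else 0)
      ≤ ∑ b, (∑ a, p a b) * logb c (M b / ∑ a, p a b) := by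
  rw [sum_comm]
  refine sum_le_sum fun b _ => ?_
  rw [sum_mul]
  exact sum_le_sum fun a _ => ite_mul_logb_div_mul_le hc (hp0 a b)
    (single_le_sum (fun b' _ => hp0 a b') (mem_univ b))
    (single_le_sum (fun a' _ => hp0 a' b) (mem_univ a)) (hM a b)

theorem shannon_le_renyi_infty_general {A B : Type*} [Fintype A] [Fintype B]
    (p : A → B → ℝ)
    (hp0 : ∀ a b, 0 ≤ p a b)
    (hp1 : ∑ a : A, ∑ b : B, p a b = 1) :
    (∑ a : A, ∑ b : B,
        if 0 < p a b then
          p a b * Real.logb 2 (p a b / ((∑ b' : B, p a b') * (∑ a' : A, p a' b)))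
        else 0)
      ≤ Real.logb 2 (∑ b : B,
          ⨆ a : {a : A // 0 < ∑ b' : B, p a b'}, p a.1 b / (∑ b' : B, p a.1 b')) := by
  set M : B → ℝ := fun b => ⨆ a : {a : A // 0 < ∑ b', p a b'}, p a.1 b / ∑ b', p a.1 b'
  have le_M : ∀ a b, 0 < ∑ b', p a b' → p a b / ∑ b', p a b' ≤ M b := fun a b ha =>
    le_ciSup (f := fun a : {a : A // 0 < ∑ b', p a b'} => p a.1 b / ∑ b', p a.1 b')
      (Set.finite_range _).bddAbove ⟨a, ha⟩
  have M_nonneg : ∀ b, 0 ≤ M b := fun b =>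
    iSup_nonneg fun a => div_nonneg (hp0 _ _) (sum_nonneg fun _ _ => hp0 _ _)
  have M_pos : ∀ b, 0 < ∑ a, p a b → 0 < M b := by
    intro b hb
    obtain ⟨a, -, hab⟩ := (sum_pos_iff_of_nonneg fun a _ => hp0 a b).1 hb
    have ha : 0 < ∑ b', p a b' := hab.trans_le (single_le_sum (fun b' _ => hp0 a b') (mem_univ b))
    exact (div_pos hab ha).trans_le (le_M a b ha)
  calc _ ≤ ∑ b, (∑ a, p a b) * logb 2 (M b / ∑ a, p a b) :=
        sum_ite_mul_logb_le_sum_mul_logb one_lt_two hp0 le_M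
    _ ≤ logb 2 (∑ b, M b) :=
        sum_mul_logb_div_le_logb_sum one_lt_two (fun b _ => sum_nonneg fun a _ => hp0 a b)
          (by rw [sum_comm]; exact hp1) (fun b _ => M_nonneg b) fun b _ => M_pos b

/-- For a probability mass function `p` on `A × B` (finite nonempty types),
the Shannon mutual information `I(A;B)` is at most the Rényi mutual information of
order infinity, `I_∞(A;B) = log₂ (∑ b, max_{a : p_A(a) > 0} p_{B|A}(b|a))`. -/
theorem shannon_le_renyi_infty {A B : Type*} [Fintype A] [Fintype B]
    [Nonempty A] [Nonempty B]
    (p : A → B → ℝ)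
    (hp0 : ∀ a b, 0 ≤ p a b)
    (hp1 : ∑ a : A, ∑ b : B, p a b = 1) :
    (∑ a : A, ∑ b : B,
        if 0 < p a b then
          p a b * Real.logb 2 (p a b / ((∑ b' : B, p a b') * (∑ a' : A, p a' b)))
        else 0)
      ≤ Real.logb 2 (∑ b : B,
          ⨆ a : {a : A // 0 < ∑ b' : B, p a b'}, p a.1 b / (∑ b' : B, p a.1 b')) :=
  shannon_le_renyi_infty_general p hp0 hp1
end

section
/- Let X, Y, Z be finite nonempty types, let q be fixed, and let α : X → ℝ≥0 and β : Y → ℝ≥0 be nonnegative functions, and fix z_q ∈ Z. For a tile t = (X_t, Y_t, z_t) with X_t ⊆ X, Y_t ⊆ Y, z_t ∈ Z, define σ_t = min_{x ∈ X_t} α(x) − max_{x' ∉ X_t} α(x') and τ_t = min_{y ∈ Y_t} β(y) − max_{y' ∉ Y_t} β(y'), where a maximum over an empty set is taken to be 0 (and σ_t, τ_t are only considered for nonempty X_t, Y_t). Let T_q = { t : σ_t > 0, τ_t > 0, and z_t = z_q }. Then for every (x,y) ∈ X × Y: Σ_{t ∈ T_q : x ∈ X_t and y ∈ Y_t} σ_t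 · τ_t = α(x) · β(y). -/
/-! Layer cake: for `t ≥ 0` put `U_t = {x | t < α x}`. A nonempty `A` equals `U_t` exactly
for `t` in `[max_{Aᶜ} α, min_A α)`, an interval of length `max σ_A 0` (`σ_A = levelGap α A`).
Over `A ∋ x` these intervals are disjoint and cover `[0, α x)`, so the positive `σ_A` with
`x ∈ A` sum to `α x`. The sum over tiles with `z_t = z_q` is a product of such a sum for `α`
and one for `β`. -/

open Finset MeasureTheory

section
variable {X : Type*} [Fintype X] [DecidableEq X]

noncomputable def levelGap (α : X → ℝ) (A : Finset X) : ℝ :=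
  (⨅ x : A, α x.1) - (⨆ x : (Aᶜ : Finset X), α x.1)

noncomputable def strictSuperlevel (α : X → ℝ) (t : ℝ) : Finset X :=
  univ.filter fun x => t < α x

omit [Fintype X] [DecidableEq X] in
theorem lt_iInf_finset_iff {α : X → ℝ} {A : Finset X} (hA : A.Nonempty) {t : ℝ} :
    t < ⨅ x : A, α x.1 ↔ ∀ x ∈ A, t < α x := by
  have : Nonempty A := hA.to_subtype
  obtain ⟨⟨x₀, hx₀⟩, h⟩ := exists_eq_ciInf_of_finite (f := fun x : A => α x.1)
  refine ⟨fun ht x hx => ht.trans_le ?_, fun ht => h ▸ ht x₀ hx₀⟩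
  exact ciInf_le (Finite.bddBelow_range (fun y : A => α y.1)) ⟨x, hx⟩

-- `⨆` over an empty type is `0` in `ℝ`, which is where `0 ≤ t` comes from.
theorem iSup_compl_le_iff {α : X → ℝ} (hα : ∀ x, 0 ≤ α x) (A : Finset X) {t : ℝ} :
    (⨆ x : (Aᶜ : Finset X), α x.1) ≤ t ↔ 0 ≤ t ∧ ∀ x ∉ A, α x ≤ t := by
  refine ⟨fun ht => ⟨(Real.iSup_nonneg fun x : (Aᶜ : Finset X) => hα x.1).trans ht,
      fun x hx => ?_⟩,
    fun ⟨ht, hle⟩ => Real.iSup_le (fun x => hle x.1 (mem_compl.1 x.2)) ht⟩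
  exact (le_ciSup (Finite.bddAbove_range (fun y : (Aᶜ : Finset X) => α y.1))
    ⟨x, mem_compl.2 hx⟩).trans ht

theorem mem_Ico_iff_strictSuperlevel_eq {α : X → ℝ} (hα : ∀ x, 0 ≤ α x) {A : Finset X}
    (hA : A.Nonempty) {t : ℝ} :
    t ∈ Set.Ico (⨆ x : (Aᶜ : Finset X), α x.1) (⨅ x : A, α x.1) ↔
      0 ≤ t ∧ strictSuperlevel α t = A := by
  rw [Set.mem_Ico, iSup_compl_le_iff hα, lt_iInf_finset_iff hA, and_assoc, Finset.ext_iff]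
  simp only [strictSuperlevel, mem_filter, mem_univ, true_and]
  refine and_congr_right fun _ => ⟨fun ⟨hout, hin⟩ x => ⟨fun h => ?_, hin x⟩, fun h => ?_⟩
  · by_contra hx; exact (hout x hx).not_gt h
  · exact ⟨fun x hx => not_lt.1 fun h' => hx ((h x).1 h'), fun x => (h x).2⟩

theorem sum_max_levelGap_zero {α : X → ℝ} (hα : ∀ x, 0 ≤ α x) (x : X) :
    ∑ A ∈ univ.filter (x ∈ ·), max (levelGap α A) 0 = α x := by
  set I : Finset X → Set ℝ := fun A => Set.Ico (⨆ x : (Aᶜ : Finset X), α x.1) (⨅ x : A, α x.1)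
  have hI : ∀ A ∈ univ.filter (x ∈ ·), ∀ t, t ∈ I A ↔ 0 ≤ t ∧ strictSuperlevel α t = A :=
    fun A hA t => mem_Ico_iff_strictSuperlevel_eq hα ⟨x, (mem_filter.1 hA).2⟩
  have hunion : (⋃ A ∈ univ.filter (x ∈ ·), I A) = Set.Ico 0 (α x) := by
    ext t
    simp only [Set.mem_iUnion, exists_prop, Set.mem_Ico]
    constructor
    · rintro ⟨A, hA, ht⟩
      obtain ⟨ht0, rfl⟩ := (hI A hA t).1 ht
      exact ⟨ht0, by simpa [strictSuperlevel] using (mem_filter.1 hA).2⟩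
    · rintro ⟨ht0, htx⟩
      have hA : strictSuperlevel α t ∈ univ.filter (x ∈ ·) := by simp [strictSuperlevel, htx]
      exact ⟨_, hA, (hI _ hA t).2 ⟨ht0, rfl⟩⟩
  calc ∑ A ∈ univ.filter (x ∈ ·), max (levelGap α A) 0
      = ∑ A ∈ univ.filter (x ∈ ·), volume.real (I A) := by
        simp only [I, Real.volume_real_Ico, levelGap]
    _ = volume.real (⋃ A ∈ univ.filter (x ∈ ·), I A) := by
        refine (measureReal_biUnion_finset (fun A hA B hB hAB => ?_)
          (fun _ _ => measurableSet_Ico) (fun _ _ => measure_Ico_lt_top.ne)).symm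
        refine Set.disjoint_left.2 fun t htA htB => hAB ?_
        exact ((hI A hA t).1 htA).2.symm.trans ((hI B hB t).1 htB).2
    _ = α x := by rw [hunion, Real.volume_real_Ico, sub_zero, max_eq_left (hα x)]

theorem sum_levelGap_of_pos {α : X → ℝ} (hα : ∀ x, 0 ≤ α x) (x : X) :
    ∑ A ∈ univ.filter (fun A => 0 < levelGap α A ∧ x ∈ A), levelGap α A = α x := by
  rw [← sum_max_levelGap_zero hα x, sum_filter, sum_filter]
  refine sum_congr rfl fun A _ => ?_
  by_cases hxA : x ∈ A
  · simp only [hxA, and_true, if_true, max_def_lt]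
    split_ifs <;> linarith
  · simp [hxA]

end

theorem telescope_claim_general {X Y Z : Type*} [Fintype X] [Fintype Y] [Fintype Z]
    [DecidableEq X] [DecidableEq Y] [DecidableEq Z]
    (α : X → ℝ) (β : Y → ℝ) (hα : ∀ x, 0 ≤ α x) (hβ : ∀ y, 0 ≤ β y)
    (zq : Z)
    (σ τ : Finset X × Finset Y × Z → ℝ)
    (hσ : ∀ t : Finset X × Finset Y × Z,
      σ t = (⨅ x : t.1, α x.1) - (⨆ x : (t.1ᶜ : Finset X), α x.1))
    (hτ : ∀ t : Finset X × Finset Y × Z,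
      τ t = (⨅ y : t.2.1, β y.1) - (⨆ y : (t.2.1ᶜ : Finset Y), β y.1))
    (x : X) (y : Y) :
    (∑ t ∈ Finset.univ.filter (fun t : Finset X × Finset Y × Z =>
        (0 < σ t ∧ 0 < τ t ∧ t.2.2 = zq) ∧ x ∈ t.1 ∧ y ∈ t.2.1),
      σ t * τ t) = α x * β y := by
  obtain rfl : σ = fun t => levelGap α t.1 := funext hσ
  obtain rfl : τ = fun t => levelGap β t.2.1 := funext hτ
  have htiles : univ.filter (fun t : Finset X × Finset Y × Z =>
        (0 < levelGap α t.1 ∧ 0 < levelGap β t.2.1 ∧ t.2.2 = zq) ∧ x ∈ t.1 ∧ y ∈ t.2.1) =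
      univ.filter (fun A => 0 < levelGap α A ∧ x ∈ A) ×ˢ
        (univ.filter (fun B => 0 < levelGap β B ∧ y ∈ B) ×ˢ {zq}) := by
    ext ⟨A, B, z⟩
    simp only [mem_filter, mem_univ, true_and, mem_product, mem_singleton]
    tauto
  rw [htiles, ← sum_levelGap_of_pos hα x, ← sum_levelGap_of_pos hβ y, sum_product, sum_mul_sum]
  simp_rw [sum_product, sum_singleton]

/-- telescoping claim: Fix `z_q ∈ Z` and nonnegative `α : X → ℝ`,
`β : Y → ℝ`.  For a tile `t = (X_t, Y_t, z_t)` let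
`σ t = min_{x ∈ X_t} α x − max_{x' ∉ X_t} α x'` and
`τ t = min_{y ∈ Y_t} β y − max_{y' ∉ Y_t} β y'` (suprema/infima over empty sets
being `0` in `ℝ`).  Then for every `(x, y)`, the sum of `σ t * τ t` over the tiles
`t ∈ T_q = {t : σ t > 0, τ t > 0, z_t = z_q}` containing `(x, y)` equals `α x * β y`. -/
theorem telescope_claim {X Y Z : Type*} [Fintype X] [Fintype Y] [Fintype Z]
    [Nonempty X] [Nonempty Y] [Nonempty Z]
    [DecidableEq X] [DecidableEq Y] [DecidableEq Z]
    (α : X → ℝ) (β : Y → ℝ) (hα : ∀ x, 0 ≤ α x) (hβ : ∀ y, 0 ≤ β y)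
    (zq : Z)
    (σ τ : Finset X × Finset Y × Z → ℝ)
    (hσ : ∀ t : Finset X × Finset Y × Z,
      σ t = (⨅ x : t.1, α x.1) - (⨆ x : (t.1ᶜ : Finset X), α x.1))
    (hτ : ∀ t : Finset X × Finset Y × Z,
      τ t = (⨅ y : t.2.1, β y.1) - (⨆ y : (t.2.1ᶜ : Finset Y), β y.1))
    (x : X) (y : Y) :
    (∑ t ∈ Finset.univ.filter (fun t : Finset X × Finset Y × Z =>
        (0 < σ t ∧ 0 < τ t ∧ t.2.2 = zq) ∧ x ∈ t.1 ∧ y ∈ t.2.1),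
      σ t * τ t) = α x * β y :=
  telescope_claim_general α β hα hβ zq σ τ hσ hτ x y
end

section
/- Let X, Y, Z be finite nonempty types, fix z_q ∈ Z, and let α : X → ℝ≥0, β : Y → ℝ≥0 be nonnegative functions. With σ_t, τ_t and T_q defined as follows — for a tile t = (X_t, Y_t, z_t), σ_t = min_{x ∈ X_t} α(x) − max_{x' ∉ X_t} α(x') and τ_t = min_{y ∈ Y_t} β(y) − max_{y' ∉ Y_t} β(y') (maximum over the empty set is 0), and T_q = { t : σ_t > 0, τ_t > 0, z_t = z_q } — one has Σ_{t ∈ T_q} σ_t · τ_t = ( max_{x ∈ X} α(x) ) · ( max_{y ∈ Y} β(y) ). -/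
/-!
Slice the range of `α` horizontally: for a level `s > 0`, the superlevel set `{x | s ≤ α x}` is the
unique `A` with `⨆_{Aᶜ} α < s ≤ ⨅_A α`. Hence the intervals `(⨆_{Aᶜ} α, ⨅_A α]`, whose lengths are
the positive parts of `σ`, partition `(0, max α]`, and their total length is `max α`. The weight of
a tile is a product of such lengths, so the sum over tiles factorizes.
-/

open Finset MeasureTheory

section Slicing

variable {X : Type*} [Fintype X] [DecidableEq X] (f : X → ℝ)

noncomputable def sliceWeight (A : Finset X) : ℝ :=
  (⨅ x : A, f x.1) - (⨆ x : (Aᶜ : Finset X), f x.1)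

def sliceInterval (A : Finset X) : Set ℝ :=
  Set.Ioc (⨆ x : (Aᶜ : Finset X), f x.1) (⨅ x : A, f x.1)

theorem volume_sliceInterval (A : Finset X) :
    volume (sliceInterval f A) = ENNReal.ofReal (sliceWeight f A) :=
  Real.volume_Ioc

variable {f}

-- The empty infimum is the junk value `0`, which makes `sliceInterval f ∅` empty.
theorem mem_sliceInterval_iff (hf : ∀ x, 0 ≤ f x) {A : Finset X} {s : ℝ} :
    s ∈ sliceInterval f A ↔ 0 < s ∧ A.Nonempty ∧ A = univ.filter (fun x => s ≤ f x) := by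
  constructor
  · rintro ⟨hsup, hinf⟩
    have hs : 0 < s := (Real.iSup_nonneg fun _ => hf _).trans_lt hsup
    have hA : A.Nonempty := by
      by_contra hA
      rw [not_nonempty_iff_eq_empty] at hA
      subst hA
      exact hs.not_ge (hinf.trans_eq (Real.iInf_of_isEmpty _))
    refine ⟨hs, hA, ?_⟩
    ext x
    simp only [mem_filter, mem_univ, true_and]
    constructor
    · intro hx
      exact hinf.trans (ciInf_le (Finite.bddBelow_range _) (⟨x, hx⟩ : A))
    · intro hx
      by_contra hxA
      have : f x ≤ ⨆ y : (Aᶜ : Finset X), f y.1 :=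
        le_ciSup (Finite.bddAbove_range fun y : (Aᶜ : Finset X) => f y.1) ⟨x, mem_compl.2 hxA⟩
      linarith
  · rintro ⟨hs, hA, rfl⟩
    have : Nonempty (univ.filter fun x => s ≤ f x) := hA.to_subtype
    refine ⟨?_, le_ciInf fun x => (mem_filter.1 x.2).2⟩
    rcases isEmpty_or_nonempty ((univ.filter fun x => s ≤ f x)ᶜ : Finset X) with hc | hc
    · rwa [Real.iSup_of_isEmpty]
    · obtain ⟨y, hy⟩ := exists_eq_ciSup_of_finite
        (f := fun y : ((univ.filter fun x => s ≤ f x)ᶜ : Finset X) => f y.1)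
      rw [← hy]
      simpa using y.2

theorem pairwise_disjoint_sliceInterval (hf : ∀ x, 0 ≤ f x) :
    Pairwise (Function.onFun Disjoint (sliceInterval f)) := fun _ _ hAB =>
  Set.disjoint_left.2 fun _ hA hB =>
    hAB (((mem_sliceInterval_iff hf).1 hA).2.2.trans ((mem_sliceInterval_iff hf).1 hB).2.2.symm)

theorem iUnion_sliceInterval (hf : ∀ x, 0 ≤ f x) :
    ⋃ A : Finset X, sliceInterval f A = Set.Ioc 0 (⨆ x, f x) := by
  ext s
  simp only [Set.mem_iUnion, mem_sliceInterval_iff hf, Set.mem_Ioc]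
  constructor
  · rintro ⟨A, hs, ⟨x, hx⟩, rfl⟩
    exact ⟨hs, (mem_filter.1 hx).2.trans (le_ciSup (Finite.bddAbove_range f) x)⟩
  · rintro ⟨hs, hsM⟩
    rcases isEmpty_or_nonempty X with hX | hX
    · rw [Real.iSup_of_isEmpty] at hsM
      exact absurd hsM hs.not_ge
    obtain ⟨x, hx⟩ := exists_eq_ciSup_of_finite (f := f)
    exact ⟨_, hs, ⟨x, mem_filter.2 ⟨mem_univ x, hsM.trans_eq hx.symm⟩⟩, rfl⟩

theorem sum_ofReal_sliceWeight (hf : ∀ x, 0 ≤ f x) :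
    ∑ A : Finset X, ENNReal.ofReal (sliceWeight f A) = ENNReal.ofReal (⨆ x, f x) := by
  calc ∑ A : Finset X, ENNReal.ofReal (sliceWeight f A)
      = ∑' A : Finset X, volume (sliceInterval f A) := by
        simp only [volume_sliceInterval, tsum_fintype]
    _ = volume (⋃ A : Finset X, sliceInterval f A) :=
        (measure_iUnion (pairwise_disjoint_sliceInterval hf) fun _ => measurableSet_Ioc).symm
    _ = ENNReal.ofReal (⨆ x, f x) := by
        rw [iUnion_sliceInterval hf, Real.volume_Ioc, sub_zero]

theorem sum_filter_pos_sliceWeight (hf : ∀ x, 0 ≤ f x) :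
    ∑ A ∈ univ.filter (fun A : Finset X => 0 < sliceWeight f A), sliceWeight f A = ⨆ x, f x := by
  have hsum := sum_ofReal_sliceWeight hf
  rw [← sum_filter_of_ne fun A _ h => ENNReal.ofReal_pos.1 (pos_iff_ne_zero.2 h),
    ← ENNReal.ofReal_sum_of_nonneg fun A hA => (mem_filter.1 hA).2.le] at hsum
  exact (ENNReal.ofReal_eq_ofReal_iff (sum_nonneg fun A hA => (mem_filter.1 hA).2.le)
    (Real.iSup_nonneg hf)).1 hsum

end Slicing

theorem total_sliced_weight_general {X Y Z : Type*} [Fintype X] [Fintype Y] [Fintype Z]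
    [DecidableEq X] [DecidableEq Y] [DecidableEq Z]
    (α : X → ℝ) (β : Y → ℝ) (hα : ∀ x, 0 ≤ α x) (hβ : ∀ y, 0 ≤ β y)
    (zq : Z)
    (σ τ : Finset X × Finset Y × Z → ℝ)
    (hσ : ∀ t : Finset X × Finset Y × Z,
      σ t = (⨅ x : t.1, α x.1) - (⨆ x : (t.1ᶜ : Finset X), α x.1))
    (hτ : ∀ t : Finset X × Finset Y × Z,
      τ t = (⨅ y : t.2.1, β y.1) - (⨆ y : (t.2.1ᶜ : Finset Y), β y.1)) :
    (∑ t ∈ Finset.univ.filter (fun t : Finset X × Finset Y × Z =>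
        0 < σ t ∧ 0 < τ t ∧ t.2.2 = zq),
      σ t * τ t) = (⨆ x : X, α x) * (⨆ y : Y, β y) := by
  have hσ' : ∀ t, σ t = sliceWeight α t.1 := hσ
  have hτ' : ∀ t, τ t = sliceWeight β t.2.1 := hτ
  have htiles : univ.filter (fun t : Finset X × Finset Y × Z => 0 < σ t ∧ 0 < τ t ∧ t.2.2 = zq) =
      univ.filter (fun A => 0 < sliceWeight α A) ×ˢ
        univ.filter (fun B => 0 < sliceWeight β B) ×ˢ {zq} := by
    ext ⟨A, B, z⟩
    simp [hσ', hτ', eq_comm]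
  rw [htiles, sum_product, ← sum_filter_pos_sliceWeight hα, ← sum_filter_pos_sliceWeight hβ,
    sum_mul_sum]
  refine sum_congr rfl fun A _ => ?_
  rw [sum_product]
  simp [hσ', hτ']

/-- With `σ`, `τ` and `T_q = {t : σ t > 0, τ t > 0, z_t = z_q}` as in the
slicing construction, the total sliced weight `∑_{t ∈ T_q} σ t * τ t` equals
`(max_x α x) * (max_y β y)`. -/
theorem total_sliced_weight {X Y Z : Type*} [Fintype X] [Fintype Y] [Fintype Z]
    [Nonempty X] [Nonempty Y] [Nonempty Z]
    [DecidableEq X] [DecidableEq Y] [DecidableEq Z]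
    (α : X → ℝ) (β : Y → ℝ) (hα : ∀ x, 0 ≤ α x) (hβ : ∀ y, 0 ≤ β y)
    (zq : Z)
    (σ τ : Finset X × Finset Y × Z → ℝ)
    (hσ : ∀ t : Finset X × Finset Y × Z,
      σ t = (⨅ x : t.1, α x.1) - (⨆ x : (t.1ᶜ : Finset X), α x.1))
    (hτ : ∀ t : Finset X × Finset Y × Z,
      τ t = (⨅ y : t.2.1, β y.1) - (⨆ y : (t.2.1ᶜ : Finset Y), β y.1)) :
    (∑ t ∈ Finset.univ.filter (fun t : Finset X × Finset Y × Z =>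
        0 < σ t ∧ 0 < τ t ∧ t.2.2 = zq),
      σ t * τ t) = (⨆ x : X, α x) * (⨆ y : Y, β y) :=
  total_sliced_weight_general α β hα hβ zq σ τ hσ hτ
end

section
/- Let X, Y, Z be finite nonempty types, let f : X × Y → Set Z be a relation, let E : X × Y → ℝ be an error function, and let T be the finite set of all tiles for (X,Y,Z). Let Q be a finite type and let p : Q → X → Y → ℝ≥0 with output map q ↦ z_q ∈ Z be a pseudotranscript for f, i.e.: Σ_q p(q|x,y) = 1 for all (x,y), there exist α : Q × X → ℝ≥0 and β : Q × Y → ℝ≥0 with p(q|x,y) = α(q,x)·β(q,y) for all q,x,y, and Σ_{q : z_q ∉ f(x,y)} p(q|x,y) ≤ E(x,y) for all (x,y). Then there exists w : T → ℝ with 0 ≤ w(t) ≤ 1 for all t, such that: (i) Σ_{t : (x,y) ∈ t} w(t) = 1 for all (x,y); (ii) Σ_{t : (x,y) ∈ t, z_t ∉ f(x,y)} w(t) ≤ E(x,y) for all (x,y); and (iii) Σ_{t ∈ T} w(t) = Σ_{q ∈ Q} max_{(x,y) ∈ X × Y} p(q|x,y). -/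
/-!
Layer cake: a nonnegative `a : X → ℝ` equals `∫₀^{max a} 𝟙[x ∈ {a ≥ v}] dv`, a nonnegative
combination of indicators of its superlevel sets `S` with total weight `max a`. Applying this to
both factors of `p(q|x,y) = α(q,x) β(q,y)` splits each `p(q|·,·)` into rectangles `S × T` of
weight `u(S) u(T)`, labelled by `z_q`. Summing over `q`, the weight of the rectangles containing
`(x,y)` is `∑_q p(q|x,y)` (restricted to the erring `q` for the error), and the total weight is
`∑_q max α(q,·) · max β(q,·) = ∑_q max p(q|·,·)`.
-/

open Finset MeasureTheory

theorem Real.iSup_mul_iSup_of_nonneg {ι κ : Type*} [Finite ι] [Finite κ] {a : ι → ℝ} {b : κ → ℝ}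
    (ha : ∀ i, 0 ≤ a i) (hb : ∀ k, 0 ≤ b k) :
    (⨆ i, a i) * (⨆ k, b k) = ⨆ ik : ι × κ, a ik.1 * b ik.2 := by
  rw [ciSup_prod (Set.finite_range _).bddAbove, Real.iSup_mul_of_nonneg (Real.iSup_nonneg hb)]
  simp_rw [Real.mul_iSup_of_nonneg (ha _)]

section LayerCake

variable {X : Type*} [Fintype X]

noncomputable def superlevel (a : X → ℝ) (v : ℝ) : Finset X := univ.filter (v ≤ a ·)

/-- The length of the set of heights `v ∈ (0, max a]` whose superlevel set is `S`; cutting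
at `max a` is what gives `S = ∅` weight zero. -/
noncomputable def layerWeight (a : X → ℝ) (S : Finset X) : ℝ :=
  volume.real (Set.Ioc 0 (⨆ x, a x) ∩ {v | superlevel a v = S})

theorem measurableSet_superlevel_eq (a : X → ℝ) (S : Finset X) :
    MeasurableSet {v | superlevel a v = S} := by
  have : {v | superlevel a v = S} = ⋂ x, {v | v ≤ a x ↔ x ∈ S} := by
    ext v; simp [superlevel, Finset.ext_iff]
  rw [this]
  refine MeasurableSet.iInter fun x => ?_
  by_cases hx : x ∈ S
  · convert measurableSet_Iic (a := a x) using 1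
    ext v; simp [hx]
  · convert (measurableSet_Iic (a := a x)).compl using 1
    ext v; simp [hx]

theorem sum_layerWeight (a : X → ℝ) (s : Finset (Finset X)) :
    ∑ S ∈ s, layerWeight a S = volume.real (Set.Ioc 0 (⨆ x, a x) ∩ {v | superlevel a v ∈ s}) := by
  set A : Finset X → Set ℝ := fun S => Set.Ioc 0 (⨆ x, a x) ∩ {v | superlevel a v = S}
  have hA : Set.Ioc 0 (⨆ x, a x) ∩ {v | superlevel a v ∈ s} = ⋃ S ∈ s, A S := by
    ext v; simp [A]
  have hdisj : (s : Set (Finset X)).PairwiseDisjoint A := fun S _ T _ hST =>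
    Set.disjoint_left.2 fun v hS hT => hST (hS.2.symm.trans hT.2)
  have hmeas : ∀ S ∈ s, MeasurableSet (A S) := fun S _ =>
    measurableSet_Ioc.inter (measurableSet_superlevel_eq a S)
  have hfin : ∀ S ∈ s, volume (A S) ≠ ⊤ := fun S _ =>
    ((measure_mono Set.inter_subset_left).trans_lt measure_Ioc_lt_top).ne
  rw [hA, measureReal_biUnion_finset hdisj hmeas hfin]
  rfl

theorem layerWeight_nonneg (a : X → ℝ) (S : Finset X) : 0 ≤ layerWeight a S :=
  measureReal_nonneg

theorem layerWeight_empty (a : X → ℝ) : layerWeight a ∅ = 0 := by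
  rcases isEmpty_or_nonempty X with _ | _
  · simp [layerWeight, Real.iSup_of_isEmpty]
  obtain ⟨x₀, hx₀⟩ := exists_eq_ciSup_of_finite (f := a)
  have : Set.Ioc 0 (⨆ x, a x) ∩ {v | superlevel a v = ∅} = ∅ := by
    ext v
    simp only [Set.mem_inter_iff, Set.mem_Ioc, Set.mem_ofPred_eq, superlevel,
      filter_eq_empty_iff, mem_univ, true_implies, not_le, Set.mem_empty_iff_false, iff_false]
    rintro ⟨⟨-, hv⟩, hlt⟩
    exact (@hlt x₀).not_ge (hx₀ ▸ hv)
  simp [layerWeight, this]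

theorem sum_layerWeight_univ {a : X → ℝ} (ha : ∀ x, 0 ≤ a x) :
    ∑ S, layerWeight a S = ⨆ x, a x := by
  rw [sum_layerWeight]
  simp [Real.volume_real_Ioc_of_le (Real.iSup_nonneg ha)]

variable [DecidableEq X]

theorem sum_layerWeight_mem {a : X → ℝ} (ha : ∀ x, 0 ≤ a x) (x : X) :
    ∑ S ∈ univ.filter (x ∈ ·), layerWeight a S = a x := by
  have hx : a x ≤ ⨆ x, a x := le_ciSup (Set.finite_range a).bddAbove x
  have : Set.Ioc 0 (⨆ x, a x) ∩ {v | superlevel a v ∈ univ.filter (x ∈ ·)} = Set.Ioc 0 (a x) := by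
    ext v
    simp only [superlevel, Set.mem_inter_iff, Set.mem_Ioc, Set.mem_ofPred_eq, mem_filter, mem_univ,
      true_and]
    exact ⟨fun h => ⟨h.1.1, h.2⟩, fun h => ⟨⟨h.1, h.2.trans hx⟩, h.2⟩⟩
  rw [sum_layerWeight, this, Real.volume_real_Ioc_of_le (ha x), sub_zero]

end LayerCake

section Tiles

variable {X Y Z : Type*} [Fintype X] [Fintype Y] [Fintype Z] [DecidableEq X] [DecidableEq Y]

theorem le_one_of_sum_cover {w : Finset X × Finset Y × Z → ℝ} (hw : ∀ t, 0 ≤ w t)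
    (hcover : ∀ x y, ∑ t ∈ univ.filter (fun t : Finset X × Finset Y × Z => x ∈ t.1 ∧ y ∈ t.2.1),
      w t = 1)
    (hsupp : ∀ t, w t ≠ 0 → t.1.Nonempty ∧ t.2.1.Nonempty) (t : Finset X × Finset Y × Z) :
    w t ≤ 1 := by
  by_cases ht : w t = 0
  · simp [ht]
  obtain ⟨⟨x, hx⟩, ⟨y, hy⟩⟩ := hsupp t ht
  rw [← hcover x y]
  exact single_le_sum (fun t _ => hw t) (by simp [hx, hy])

variable [DecidableEq Z]

omit [DecidableEq X] [DecidableEq Y] in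
theorem sum_rectangle (g : Finset X → ℝ) (h : Finset Y → ℝ) (ζ : Z) :
    ∑ t : Finset X × Finset Y × Z, (if t.2.2 = ζ then g t.1 * h t.2.1 else 0)
    = (∑ S, g S) * ∑ T, h T := by
  simp [Fintype.sum_prod_type, sum_ite_eq', sum_mul_sum]

theorem sum_filter_rectangle (g : Finset X → ℝ) (h : Finset Y → ℝ) (ζ : Z) (x : X) (y : Y)
    (P : Z → Prop) [DecidablePred P] :
    ∑ t ∈ univ.filter (fun t : Finset X × Finset Y × Z => (x ∈ t.1 ∧ y ∈ t.2.1) ∧ P t.2.2),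
      (if t.2.2 = ζ then g t.1 * h t.2.1 else 0)
    = if P ζ then (∑ S ∈ univ.filter (x ∈ ·), g S) * ∑ T ∈ univ.filter (y ∈ ·), h T else 0 := by
  have : univ.filter (fun t : Finset X × Finset Y × Z => (x ∈ t.1 ∧ y ∈ t.2.1) ∧ P t.2.2) =
      univ.filter (x ∈ ·) ×ˢ univ.filter (y ∈ ·) ×ˢ univ.filter P := by
    ext; simp [and_assoc]
  rw [this, sum_mul_sum]
  by_cases hP : P ζ <;> simp [sum_product, sum_ite_eq', hP]

end Tiles

section FactorizedTiling

variable {X Y Z Q : Type*} [Fintype X] [Fintype Y] [Fintype Q] [DecidableEq Z]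

noncomputable def factorizedTiling (a : Q → X → ℝ) (b : Q → Y → ℝ) (z : Q → Z)
    (t : Finset X × Finset Y × Z) : ℝ :=
  ∑ q, if t.2.2 = z q then layerWeight (a q) t.1 * layerWeight (b q) t.2.1 else 0

variable (a : Q → X → ℝ) (b : Q → Y → ℝ) (z : Q → Z)

theorem factorizedTiling_nonneg (t : Finset X × Finset Y × Z) : 0 ≤ factorizedTiling a b z t :=
  sum_nonneg fun q _ => by
    split_ifs
    exacts [mul_nonneg (layerWeight_nonneg _ _) (layerWeight_nonneg _ _), le_rfl]

theorem nonempty_of_factorizedTiling_ne_zero {t : Finset X × Finset Y × Z}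
    (ht : factorizedTiling a b z t ≠ 0) : t.1.Nonempty ∧ t.2.1.Nonempty := by
  obtain ⟨q, -, hq⟩ := exists_ne_zero_of_sum_ne_zero ht
  have hprod : layerWeight (a q) t.1 * layerWeight (b q) t.2.1 ≠ 0 := by
    rintro h; simp [h] at hq
  refine ⟨nonempty_iff_ne_empty.2 ?_, nonempty_iff_ne_empty.2 ?_⟩ <;>
    rintro h <;> simp [h, layerWeight_empty] at hprod

variable [Fintype Z]

theorem sum_factorizedTiling {a : Q → X → ℝ} {b : Q → Y → ℝ}
    (ha : ∀ q x, 0 ≤ a q x) (hb : ∀ q y, 0 ≤ b q y) :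
    ∑ t, factorizedTiling a b z t = ∑ q, (⨆ x, a q x) * ⨆ y, b q y := by
  simp only [factorizedTiling]
  rw [sum_comm]
  simp only [sum_rectangle, sum_layerWeight_univ (ha _), sum_layerWeight_univ (hb _)]

variable [DecidableEq X] [DecidableEq Y]

theorem sum_filter_factorizedTiling {a : Q → X → ℝ} {b : Q → Y → ℝ}
    (ha : ∀ q x, 0 ≤ a q x) (hb : ∀ q y, 0 ≤ b q y) (x : X) (y : Y)
    (P : Z → Prop) [DecidablePred P] :
    ∑ t ∈ univ.filter (fun t : Finset X × Finset Y × Z => (x ∈ t.1 ∧ y ∈ t.2.1) ∧ P t.2.2),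
      factorizedTiling a b z t = ∑ q ∈ univ.filter (fun q => P (z q)), a q x * b q y := by
  simp only [factorizedTiling]
  rw [sum_comm, sum_filter]
  simp only [sum_filter_rectangle, sum_layerWeight_mem (ha _), sum_layerWeight_mem (hb _)]

end FactorizedTiling

/-- Every pseudotranscript `p : Q → X → Y → ℝ≥0` for a relation `f`
(normalized, factorizing, with error at most `E`) yields a feasible weighting `w`
for the partition bound with the same error, whose total weight `∑_t w t` equals
the Rényi-∞ information cost `∑_q max_{x,y} p(q|x,y)`. -/
theorem pseudotranscript_gives_tiling {X Y Z Q : Type*}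
    [Fintype X] [Fintype Y] [Fintype Z] [Fintype Q]
    [Nonempty X] [Nonempty Y] [Nonempty Z] [Nonempty Q]
    [DecidableEq X] [DecidableEq Y] [DecidableEq Z]
    (f : X × Y → Set Z) [∀ xy : X × Y, DecidablePred (· ∈ f xy)]
    (E : X × Y → ℝ)
    (p : Q → X → Y → ℝ) (z : Q → Z)
    (hp0 : ∀ q x y, 0 ≤ p q x y)
    (hp1 : ∀ x y, ∑ q : Q, p q x y = 1)
    (hfac : ∃ (a : Q → X → ℝ) (b : Q → Y → ℝ),
      (∀ q x, 0 ≤ a q x) ∧ (∀ q y, 0 ≤ b q y) ∧ ∀ q x y, p q x y = a q x * b q y)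
    (herr : ∀ x y,
      ∑ q ∈ Finset.univ.filter (fun q : Q => z q ∉ f (x, y)), p q x y ≤ E (x, y)) :
    ∃ w : Finset X × Finset Y × Z → ℝ,
      (∀ t, 0 ≤ w t ∧ w t ≤ 1) ∧
      (∀ x y,
        ∑ t ∈ Finset.univ.filter (fun t : Finset X × Finset Y × Z => x ∈ t.1 ∧ y ∈ t.2.1),
          w t = 1) ∧
      (∀ x y,
        ∑ t ∈ Finset.univ.filter (fun t : Finset X × Finset Y × Z =>
            (x ∈ t.1 ∧ y ∈ t.2.1) ∧ t.2.2 ∉ f (x, y)), w t ≤ E (x, y)) ∧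
      ((∑ t : Finset X × Finset Y × Z, w t)
        = ∑ q : Q, ⨆ xy : X × Y, p q xy.1 xy.2) := by
  obtain ⟨a, b, ha, hb, hab⟩ := hfac
  obtain rfl : p = fun q x y => a q x * b q y := funext₃ hab
  beta_reduce at hp1 herr
  have hcover (x : X) (y : Y) :
      ∑ t ∈ univ.filter (fun t : Finset X × Finset Y × Z => x ∈ t.1 ∧ y ∈ t.2.1),
        factorizedTiling a b z t = 1 := by
    simpa [hp1 x y] using sum_filter_factorizedTiling z ha hb x y fun _ => True
  refine ⟨factorizedTiling a b z, fun t => ⟨factorizedTiling_nonneg a b z t, ?_⟩,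
    hcover, fun x y => ?_, ?_⟩
  · exact le_one_of_sum_cover (factorizedTiling_nonneg a b z) hcover
        (fun _ => nonempty_of_factorizedTiling_ne_zero a b z) t
  · exact (sum_filter_factorizedTiling z ha hb x y (· ∉ f (x, y))).trans_le (herr x y)
  · rw [sum_factorizedTiling z ha hb]
    exact sum_congr rfl fun q _ => Real.iSup_mul_iSup_of_nonneg (ha q) (hb q)
end

section
/- Let X, Y, Z be finite nonempty types, let f : X × Y → Set Z be a relation, let E : X × Y → ℝ be an error function, and let T be the finite set of all tiles for (X,Y,Z). Define A = { Σ_{t∈T} w(t) : w : T → ℝ, 0 ≤ w(t) ≤ 1 for all t, Σ_{t : (x,y)∈t} w(t) = 1 and Σ_{t : (x,y)∈t, z_t ∉ f(x,y)} w(t) ≤ E(x,y) for all (x,y) } and B = { Σ_{q ∈ Fin n} max_{(x,y)} p(q|x,y) : n ∈ ℕ, p a pseudotranscript for f on alphabet Fin n with Σ_{q : z_q ∉ f(x,y)} p(q|x,y) ≤ E(x,y) for all (x,y) }. Then the infimum (in ℝ) of A equals the infimum of B (and in particular one is nonempty iff the other is). -/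
/-!
A feasible weighting `w` of the tiles is itself a pseudotranscript: the messages are the tiles,
and tile `t` is sent with probability `w t` on the inputs it covers, so its largest probability
is at most `w t`. Conversely, let `p(q|x,y) = a_q(x) b_q(y)` be a pseudotranscript. Peeling off
level sets writes `a_q` as a nonnegative combination of indicators of nonempty sets with total
weight at most `max a_q`, and likewise `b_q`; the products of these rectangles, labelled `z_q`,
form a feasible weighting of total weight at most `∑_q max a_q · max b_q = ∑_q max p(q|·,·)`.
Hence each of the two sets dominates the other elementwise, and their infima agree.
-/

open Finset

theorem exists_layer_decomposition {ι : Type*} [Fintype ι] [DecidableEq ι] (a : ι → ℝ)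
    (ha : ∀ i, 0 ≤ a i) {M : ℝ} (haM : ∀ i, a i ≤ M) (hM : 0 ≤ M) :
    ∃ c : Finset ι → ℝ, (∀ S, 0 ≤ c S) ∧ c ∅ = 0 ∧
      (∀ i, ∑ S with i ∈ S, c S = a i) ∧ ∑ S, c S ≤ M := by
  induction hn : #{i | 0 < a i} using Nat.strong_induction_on generalizing a M with
  | _ n ih =>
  set S : Finset ι := {i | 0 < a i}
  have hmemS : ∀ i, i ∈ S ↔ 0 < a i := fun i => by simp [S]
  rcases S.eq_empty_or_nonempty with hS₀ | hSne
  · have ha₀ : ∀ i, a i = 0 := fun i =>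
      (ha i).antisymm' (not_lt.1 fun h => by simpa [hS₀] using (hmemS i).2 h)
    exact ⟨0, fun _ => le_rfl, rfl, fun i => by simp [ha₀], by simpa using hM⟩
  -- Peel off the bottom layer: the set `S` where `a` is positive, at height `m = min_S a`.
  obtain ⟨i₀, hi₀, hmin⟩ := S.exists_min_image a hSne
  set m := a i₀
  have hm : 0 < m := (hmemS i₀).1 hi₀
  have hmM : m ≤ M := haM i₀
  set a' : ι → ℝ := fun i => if i ∈ S then a i - m else 0
  have hlt : #{i | 0 < a' i} < n := by
    rw [← hn]
    refine card_lt_card ((ssubset_iff_of_subset fun i hi => ?_).2 ⟨i₀, hi₀, by simp [a', hi₀, m]⟩)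
    by_contra h
    simp [a', h] at hi
  obtain ⟨c', hc'0, hc'empty, hc'a, hc'M⟩ := ih _ hlt a'
    (fun i => by by_cases h : i ∈ S <;> simp [a', h, hmin]) (M := M - m)
    (fun i => by by_cases h : i ∈ S <;> simp [a', h, haM, hmM]) (sub_nonneg.2 hmM) rfl
  refine ⟨fun T => c' T + if T = S then m else 0, fun T => ?_, ?_, fun i => ?_, ?_⟩
  · have := hc'0 T; dsimp only; split_ifs <;> linarith
  · simp [hc'empty, hSne.ne_empty.symm]
  · rw [sum_add_distrib, hc'a, sum_ite_eq']
    by_cases h : i ∈ S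
    · simp [a', h]
    · simp only [h, ↓reduceIte, mem_filter, mem_univ, and_false, add_zero, a']
      exact (ha i).antisymm (not_lt.1 fun h' => h ((hmemS i).2 h'))
  · rw [sum_add_distrib, sum_ite_eq', if_pos (mem_univ S)]
    linarith

theorem Real.iSup_prod_mul_of_nonneg {ι ι' : Type*} [Finite ι] [Finite ι'] {a : ι → ℝ}
    {b : ι' → ℝ} (ha : ∀ i, 0 ≤ a i) (hb : ∀ j, 0 ≤ b j) :
    ⨆ p : ι × ι', a p.1 * b p.2 = (⨆ i, a i) * ⨆ j, b j := by
  simp_rw [Real.iSup_mul_of_nonneg (Real.iSup_nonneg hb), Real.mul_iSup_of_nonneg (ha _),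
    Finite.ciSup_prod]

section

variable {X Y Z : Type*}

def IsPartitionWeighting [Fintype X] [Fintype Y] [Fintype Z] [DecidableEq X] [DecidableEq Y]
    (f : X × Y → Set Z) [∀ xy : X × Y, DecidablePred (· ∈ f xy)] (E : X × Y → ℝ)
    (w : Finset X × Finset Y × Z → ℝ) : Prop :=
  (∀ t, 0 ≤ w t ∧ w t ≤ 1) ∧
  (∀ x y, ∑ t ∈ univ.filter (fun t : Finset X × Finset Y × Z => x ∈ t.1 ∧ y ∈ t.2.1), w t = 1) ∧
  ∀ x y, ∑ t ∈ univ.filter (fun t : Finset X × Finset Y × Z =>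
    (x ∈ t.1 ∧ y ∈ t.2.1) ∧ t.2.2 ∉ f (x, y)), w t ≤ E (x, y)

def IsPseudotranscript {Q : Type*} [Fintype Q] (f : X × Y → Set Z)
    [∀ xy : X × Y, DecidablePred (· ∈ f xy)] (E : X × Y → ℝ) (p : Q → X → Y → ℝ) (z : Q → Z) :
    Prop :=
  (∀ q x y, 0 ≤ p q x y) ∧ (∀ x y, ∑ q, p q x y = 1) ∧
  (∃ (a : Q → X → ℝ) (b : Q → Y → ℝ),
    (∀ q x, 0 ≤ a q x) ∧ (∀ q y, 0 ≤ b q y) ∧ ∀ q x y, p q x y = a q x * b q y) ∧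
  ∀ x y, ∑ q ∈ univ.filter (fun q => z q ∉ f (x, y)), p q x y ≤ E (x, y)

variable {f : X × Y → Set Z} [∀ xy : X × Y, DecidablePred (· ∈ f xy)] {E : X × Y → ℝ}

theorem IsPseudotranscript.comp_equiv {Q Q' : Type*} [Fintype Q] [Fintype Q']
    {p : Q → X → Y → ℝ} {z : Q → Z} (hp : IsPseudotranscript f E p z) (e : Q' ≃ Q) :
    IsPseudotranscript f E (fun q => p (e q)) (fun q => z (e q)) := by
  obtain ⟨hp0, hp1, ⟨a, b, ha, hb, hab⟩, herr⟩ := hp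
  refine ⟨fun q => hp0 (e q), fun x y => ?_, ⟨fun q => a (e q), fun q => b (e q),
    fun q => ha (e q), fun q => hb (e q), fun q => hab (e q)⟩, fun x y => ?_⟩
  · rw [e.sum_comp (fun q => p q x y), hp1]
  · rw [sum_filter, e.sum_comp (fun q => if z q ∉ f (x, y) then p q x y else 0), ← sum_filter]
    exact herr x y

section TileTranscript

variable [DecidableEq X] [DecidableEq Y]

def tileTranscript (w : Finset X × Finset Y × Z → ℝ) (t : Finset X × Finset Y × Z) (x : X)
    (y : Y) : ℝ :=
  if x ∈ t.1 ∧ y ∈ t.2.1 then w t else 0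

theorem sum_tileTranscript_filter [Fintype X] [Fintype Y] [Fintype Z]
    (w : Finset X × Finset Y × Z → ℝ) (P : Finset X × Finset Y × Z → Prop) [DecidablePred P]
    (x : X) (y : Y) :
    ∑ t ∈ univ.filter P, tileTranscript w t x y =
      ∑ t ∈ univ.filter (fun t : Finset X × Finset Y × Z => (x ∈ t.1 ∧ y ∈ t.2.1) ∧ P t),
        w t := by
  simp only [tileTranscript, sum_filter, ← ite_and, and_comm]

theorem IsPartitionWeighting.isPseudotranscript_tileTranscript [Fintype X] [Fintype Y]
    [Fintype Z] {w : Finset X × Finset Y × Z → ℝ} (hw : IsPartitionWeighting f E w) :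
    IsPseudotranscript f E (tileTranscript w) (fun t => t.2.2) := by
  obtain ⟨hw01, hw1, herr⟩ := hw
  refine ⟨fun t x y => ?_, fun x y => ?_, ⟨fun t x => if x ∈ t.1 then w t else 0,
    fun t y => if y ∈ t.2.1 then 1 else 0, fun t x => ?_, fun t y => ?_, fun t x y => ?_⟩,
    fun x y => ?_⟩
  · unfold tileTranscript; split_ifs <;> simp [(hw01 t).1]
  · simpa using sum_tileTranscript_filter w (fun _ => True) x y |>.trans (by simpa using hw1 x y)
  · dsimp only; split_ifs <;> simp [(hw01 t).1]
  · dsimp only; split_ifs <;> simp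
  · rw [ite_zero_mul_ite_zero, mul_one]; rfl
  · exact (sum_tileTranscript_filter w (fun t => t.2.2 ∉ f (x, y)) x y).trans_le (herr x y)

theorem iSup_tileTranscript_le {w : Finset X × Finset Y × Z → ℝ} (t : Finset X × Finset Y × Z)
    (ht : 0 ≤ w t) : ⨆ xy : X × Y, tileTranscript w t xy.1 xy.2 ≤ w t :=
  Real.iSup_le (fun xy => by unfold tileTranscript; split_ifs <;> simp [ht]) ht

theorem IsPartitionWeighting.exists_fin_isPseudotranscript [Fintype X] [Fintype Y] [Fintype Z]
    {w : Finset X × Finset Y × Z → ℝ}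
    (hw : IsPartitionWeighting f E w) :
    ∃ (n : ℕ) (p : Fin n → X → Y → ℝ) (z : Fin n → Z), IsPseudotranscript f E p z ∧
      ∑ q, ⨆ xy : X × Y, p q xy.1 xy.2 ≤ ∑ t, w t := by
  let e := (Fintype.equivFin (Finset X × Finset Y × Z)).symm
  refine ⟨_, _, _, hw.isPseudotranscript_tileTranscript.comp_equiv e, ?_⟩
  rw [e.sum_comp (fun t => ⨆ xy : X × Y, tileTranscript w t xy.1 xy.2)]
  exact sum_le_sum fun t _ => iSup_tileTranscript_le t (hw.1 t).1

end TileTranscript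

section TileWeight

variable {Q : Type*} [Fintype Q] [DecidableEq Z]

def tileWeight (cA : Q → Finset X → ℝ) (cB : Q → Finset Y → ℝ) (z : Q → Z)
    (t : Finset X × Finset Y × Z) : ℝ :=
  ∑ q, if z q = t.2.2 then cA q t.1 * cB q t.2.1 else 0

theorem sum_tileWeight_filter [Fintype X] [Fintype Y] [Fintype Z] (cA : Q → Finset X → ℝ)
    (cB : Q → Finset Y → ℝ) (z : Q → Z) (PS : Finset X → Prop) (PT : Finset Y → Prop)
    (G : Z → Prop) [DecidablePred PS] [DecidablePred PT] [DecidablePred G] :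
    ∑ t ∈ univ.filter (fun t : Finset X × Finset Y × Z => (PS t.1 ∧ PT t.2.1) ∧ G t.2.2),
        tileWeight cA cB z t =
      ∑ q ∈ univ.filter (fun q => G (z q)),
        (∑ S ∈ univ.filter PS, cA q S) * ∑ T ∈ univ.filter PT, cB q T := by
  unfold tileWeight
  rw [sum_comm, sum_filter]
  refine sum_congr rfl fun q _ => ?_
  have hz : ∀ (C : Prop) [Decidable C] (v : ℝ),
      ∑ z', (if C ∧ G z' then if z q = z' then v else 0 else 0) = if C ∧ G (z q) then v else 0 :=
    fun C _ v => (sum_eq_single (z q) (fun z' _ hne => by simp [Ne.symm hne]) (by simp)).trans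
      (by simp)
  simp only [sum_filter, Fintype.sum_prod_type, sum_mul_sum, hz]
  by_cases hG : G (z q) <;> simp [hG, ← ite_and, and_comm]

theorem IsPseudotranscript.exists_isPartitionWeighting [Fintype X] [Fintype Y] [Fintype Z]
    [DecidableEq X] [DecidableEq Y] {p : Q → X → Y → ℝ} {z : Q → Z}
    (hp : IsPseudotranscript f E p z) :
    ∃ w, IsPartitionWeighting f E w ∧ ∑ t, w t ≤ ∑ q, ⨆ xy : X × Y, p q xy.1 xy.2 := by
  obtain ⟨-, hp1, ⟨a, b, ha, hb, hab⟩, herr⟩ := hp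
  choose cA hcA0 hcA_empty hcA hcA_le using fun q => exists_layer_decomposition (a q) (ha q)
    (fun x => le_ciSup (Finite.bddAbove_range _) x) (Real.iSup_nonneg (ha q))
  choose cB hcB0 hcB_empty hcB hcB_le using fun q => exists_layer_decomposition (b q) (hb q)
    (fun y => le_ciSup (Finite.bddAbove_range _) y) (Real.iSup_nonneg (hb q))
  set w := tileWeight cA cB z
  have hsum : ∀ (x : X) (y : Y) (G : Z → Prop) [DecidablePred G],
      ∑ t ∈ univ.filter (fun t : Finset X × Finset Y × Z => (x ∈ t.1 ∧ y ∈ t.2.1) ∧ G t.2.2),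
        w t = ∑ q ∈ univ.filter (fun q => G (z q)), p q x y := by
    intro x y G _
    rw [sum_tileWeight_filter cA cB z (x ∈ ·) (y ∈ ·) G]
    simp only [hcA, hcB, hab]
  have hw0 : ∀ t, 0 ≤ w t := fun t =>
    sum_nonneg fun q _ => by split_ifs <;> simp [mul_nonneg (hcA0 q _) (hcB0 q _)]
  have hw1 : ∀ x y,
      ∑ t ∈ univ.filter (fun t : Finset X × Finset Y × Z => x ∈ t.1 ∧ y ∈ t.2.1), w t = 1 :=
    fun x y => by simpa [hp1] using hsum x y (fun _ => True)
  refine ⟨w, ⟨fun t => ⟨hw0 t, ?_⟩, hw1,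
    fun x y => (hsum x y (· ∉ f (x, y))).trans_le (herr x y)⟩, ?_⟩
  · obtain ⟨S, T, z'⟩ := t
    rcases S.eq_empty_or_nonempty with rfl | ⟨x, hx⟩
    · simp [w, tileWeight, hcA_empty]
    rcases T.eq_empty_or_nonempty with rfl | ⟨y, hy⟩
    · simp [w, tileWeight, hcB_empty]
    calc w (S, T, z') ≤ ∑ t ∈ univ.filter (fun t : Finset X × Finset Y × Z =>
          x ∈ t.1 ∧ y ∈ t.2.1), w t := single_le_sum (fun t _ => hw0 t) (by simp [hx, hy])
      _ = 1 := hw1 x y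
  · have htotal := sum_tileWeight_filter cA cB z (fun _ => True) (fun _ => True) (fun _ => True)
    simp only [and_true, filter_true] at htotal
    rw [htotal]
    refine sum_le_sum fun q _ => ?_
    simp_rw [hab, Real.iSup_prod_mul_of_nonneg (ha q) (hb q)]
    exact mul_le_mul (hcA_le q) (hcB_le q) (sum_nonneg fun T _ => hcB0 q T)
      (Real.iSup_nonneg (ha q))

end TileWeight

end

/-- The set `A` of values of feasible weightings for the partition bound
`prt(f,E)` and the set `B` of Rényi-∞ information costs `∑_q max_{x,y} p(q|x,y)` of
pseudotranscripts for `f` with error at most `E` have the same infimum in `ℝ`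
(and one is nonempty iff the other is): `p̂IC_∞(f,E) = log₂ prt(f,E)`. -/
theorem pICinfty_eq_log_prt {X Y Z : Type*} [Fintype X] [Fintype Y] [Fintype Z]
    [Nonempty X] [Nonempty Y] [Nonempty Z]
    [DecidableEq X] [DecidableEq Y] [DecidableEq Z]
    (f : X × Y → Set Z) [∀ xy : X × Y, DecidablePred (· ∈ f xy)]
    (E : X × Y → ℝ)
    (A B : Set ℝ)
    (hA : A = { s : ℝ | ∃ w : Finset X × Finset Y × Z → ℝ,
      (∀ t, 0 ≤ w t ∧ w t ≤ 1) ∧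
      (∀ x y,
        ∑ t ∈ Finset.univ.filter (fun t : Finset X × Finset Y × Z => x ∈ t.1 ∧ y ∈ t.2.1),
          w t = 1) ∧
      (∀ x y,
        ∑ t ∈ Finset.univ.filter (fun t : Finset X × Finset Y × Z =>
            (x ∈ t.1 ∧ y ∈ t.2.1) ∧ t.2.2 ∉ f (x, y)), w t ≤ E (x, y)) ∧
      s = ∑ t : Finset X × Finset Y × Z, w t })
    (hB : B = { s : ℝ | ∃ (n : ℕ) (p : Fin n → X → Y → ℝ) (z : Fin n → Z),
      (∀ q x y, 0 ≤ p q x y) ∧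
      (∀ x y, ∑ q : Fin n, p q x y = 1) ∧
      (∃ (a : Fin n → X → ℝ) (b : Fin n → Y → ℝ),
        (∀ q x, 0 ≤ a q x) ∧ (∀ q y, 0 ≤ b q y) ∧ ∀ q x y, p q x y = a q x * b q y) ∧
      (∀ x y,
        ∑ q ∈ Finset.univ.filter (fun q : Fin n => z q ∉ f (x, y)), p q x y ≤ E (x, y)) ∧
      s = ∑ q : Fin n, ⨆ xy : X × Y, p q xy.1 xy.2 }) :
    sInf A = sInf B ∧ (A.Nonempty ↔ B.Nonempty) := by
  have hAB : ∀ s ∈ A, ∃ s' ∈ B, s' ≤ s := by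
    subst hA hB
    rintro _ ⟨w, hw01, hw1, herr, rfl⟩
    obtain ⟨n, p, z, ⟨hp0, hp1, hpab, hperr⟩, hle⟩ :=
      IsPartitionWeighting.exists_fin_isPseudotranscript ⟨hw01, hw1, herr⟩
    exact ⟨_, ⟨n, p, z, hp0, hp1, hpab, hperr, rfl⟩, hle⟩
  have hBA : ∀ s ∈ B, ∃ s' ∈ A, s' ≤ s := by
    subst hA hB
    rintro _ ⟨n, p, z, hp0, hp1, hpab, hperr, rfl⟩
    obtain ⟨w, ⟨hw01, hw1, herr⟩, hle⟩ :=
      IsPseudotranscript.exists_isPartitionWeighting ⟨hp0, hp1, hpab, hperr⟩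
    exact ⟨_, ⟨w, hw01, hw1, herr, rfl⟩, hle⟩
  exact ⟨csInf_eq_csInf_of_forall_exists_le hAB hBA,
    ⟨fun ⟨s, hs⟩ => (hAB s hs).imp fun _ h => h.1, fun ⟨s, hs⟩ => (hBA s hs).imp fun _ h => h.1⟩⟩
end

section
/- Let Q, X, Y be finite nonempty types, let μ be a probability mass function on X × Y, and let p : Q → X → Y → ℝ≥0 satisfy Σ_q p(q|x,y) = 1 for all (x,y). Set p(q,x,y) = μ(x,y)·p(q|x,y) and p(q) = Σ_{(x,y)} μ(x,y)·p(q|x,y). Then Σ over those (q,x,y) with p(q,x,y) > 0 and p(q|x,y) < p(q) of p(q,x,y)·log₂( p(q)/p(q|x,y) ) is at most 1 (in fact at most (log₂ e)/e). -/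
/-!
Each negative term is bounded through `a log₂ (b / a) ≤ b / (e ln 2)`, i.e. `ln t ≤ t / e`:
the term indexed by `(q, x, y)` is at most `μ(x,y) p(q) / (e ln 2)`. Summing over `(x, y)`
and then over `q` gives `1 / (e ln 2)`, which is below `1` because `e ≥ 2` and `ln 2 > 1/2`.
-/

open Real Finset

lemma mul_log_div_le_div_exp_one {a b : ℝ} (ha : 0 < a) (hb : 0 ≤ b) :
    a * log (b / a) ≤ b / exp 1 := by
  rcases hb.eq_or_lt with rfl | hb
  · simp
  have h := exp_one_mul_le_exp (x := log (b / a))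
  rw [exp_log (div_pos hb ha)] at h
  rw [le_div_iff₀ (exp_pos 1)]
  calc a * log (b / a) * exp 1 = a * (exp 1 * log (b / a)) := by ring
    _ ≤ a * (b / a) := by gcongr
    _ = b := mul_div_cancel₀ b ha.ne'

lemma mul_logb_two_div_le {a b : ℝ} (ha : 0 < a) (hb : 0 ≤ b) :
    a * logb 2 (b / a) ≤ b / (exp 1 * log 2) := by
  rw [logb, ← mul_div_assoc, ← div_div]
  gcongr
  exact mul_log_div_le_div_exp_one ha hb

lemma one_le_exp_one_mul_log_two : 1 ≤ exp 1 * log 2 := by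
  have he : 2 ≤ exp 1 := by linarith [add_one_le_exp 1]
  nlinarith [log_two_gt_d9]

lemma negative_term_le {m s P : ℝ} (hm : 0 ≤ m) (hP : 0 ≤ P) :
    (if 0 < m * s ∧ s < P then m * s * logb 2 (P / s) else 0)
      ≤ m * P / (exp 1 * log 2) := by
  split_ifs with h
  · have hs : 0 < s := pos_of_mul_pos_right h.1 hm
    have hm : 0 < m := pos_of_mul_pos_left h.1 hs.le
    rw [mul_assoc, mul_div_assoc]
    exact mul_le_mul_of_nonneg_left (mul_logb_two_div_le hs hP) hm.le
  · have := one_le_exp_one_mul_log_two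
    positivity

lemma sum_sum_sum_mul_eq_of_sum_eq_one {Q X Y : Type*} [Fintype Q] [Fintype X] [Fintype Y]
    (μ : X → Y → ℝ) (p : Q → X → Y → ℝ) (hp1 : ∀ x y, ∑ q, p q x y = 1) :
    ∑ q, ∑ x, ∑ y, μ x y * p q x y = ∑ x, ∑ y, μ x y := by
  rw [sum_comm]
  refine sum_congr rfl fun x _ => ?_
  rw [sum_comm]
  simp only [← mul_sum, hp1, mul_one]

theorem negative_terms_small_general {Q X Y : Type*} [Fintype Q] [Fintype X] [Fintype Y]
    (μ : X → Y → ℝ) (hμ0 : ∀ x y, 0 ≤ μ x y) (hμ1 : ∑ x : X, ∑ y : Y, μ x y = 1)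
    (p : Q → X → Y → ℝ) (hp0 : ∀ q x y, 0 ≤ p q x y)
    (hp1 : ∀ x y, ∑ q : Q, p q x y = 1)
    (pq : Q → ℝ) (hpq : ∀ q, pq q = ∑ x : X, ∑ y : Y, μ x y * p q x y) :
    (∑ q : Q, ∑ x : X, ∑ y : Y,
        if 0 < μ x y * p q x y ∧ p q x y < pq q then
          μ x y * p q x y * Real.logb 2 (pq q / p q x y)
        else 0) ≤ 1 := by
  have hpq0 : ∀ q, 0 ≤ pq q := fun q => by
    rw [hpq]
    exact sum_nonneg fun x _ => sum_nonneg fun y _ => mul_nonneg (hμ0 x y) (hp0 q x y)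
  have hpq1 : ∑ q, pq q = 1 := by
    simp only [hpq]
    rw [sum_sum_sum_mul_eq_of_sum_eq_one μ p hp1, hμ1]
  set c := exp 1 * log 2
  calc _ ≤ ∑ q : Q, ∑ x : X, ∑ y : Y, μ x y * pq q / c :=
        sum_le_sum fun q _ => sum_le_sum fun x _ => sum_le_sum fun y _ =>
          negative_term_le (hμ0 x y) (hpq0 q)
    _ = (∑ x, ∑ y, μ x y) * (∑ q, pq q) / c := by
        simp only [← sum_div, ← sum_mul, mul_sum]
    _ = 1 / c := by rw [hμ1, hpq1, one_mul]
    _ ≤ 1 := div_le_one_of_le₀ one_le_exp_one_mul_log_two (by positivity)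

/-- The total magnitude of the negative terms in the expansion of the
mutual information `I(XY;Q)` is at most `1`: the sum, over triples `(q,x,y)` with
`p(q,x,y) > 0` and `p(q|x,y) < p(q)`, of `p(q,x,y) · log₂(p(q)/p(q|x,y))` is `≤ 1`. -/
theorem negative_terms_small {Q X Y : Type*} [Fintype Q] [Fintype X] [Fintype Y]
    [Nonempty Q] [Nonempty X] [Nonempty Y]
    (μ : X → Y → ℝ) (hμ0 : ∀ x y, 0 ≤ μ x y) (hμ1 : ∑ x : X, ∑ y : Y, μ x y = 1)
    (p : Q → X → Y → ℝ) (hp0 : ∀ q x y, 0 ≤ p q x y)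
    (hp1 : ∀ x y, ∑ q : Q, p q x y = 1)
    (pq : Q → ℝ) (hpq : ∀ q, pq q = ∑ x : X, ∑ y : Y, μ x y * p q x y) :
    (∑ q : Q, ∑ x : X, ∑ y : Y,
        if 0 < μ x y * p q x y ∧ p q x y < pq q then
          μ x y * p q x y * Real.logb 2 (pq q / p q x y)
        else 0) ≤ 1 :=
  negative_terms_small_general μ hμ0 hμ1 p hp0 hp1 pq hpq
end

section
/- Let Q, X, Y be finite nonempty types, let μ be a probability mass function on X × Y, and let p : Q → X → Y → ℝ≥0 satisfy Σ_q p(q|x,y) = 1 for all (x,y). Set p(q,x,y) = μ(x,y)·p(q|x,y), p(q) = Σ_{(x,y)} μ(x,y)·p(q|x,y), and I(XY;Q) = Σ_{(q,x,y): p(q,x,y)>0} p(q,x,y)·log₂( p(q|x,y)/p(q) ). Then I(XY;Q) ≥ ( Σ over those (q,x,y) with p(q,x,y) > 0 and p(q|x,y) ≥ p(q) of p(q,x,y)·log₂( p(q|x,y)/p(q) ) ) − 1. -/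
/-!
Write `t(q,x,y) = p(q,x,y)·log₂(p(q|x,y)/p(q))`. Since `u log u ≥ -1/e` and `e·ln 2 ≥ 1`, every
term satisfies `t(q,x,y) ≥ -μ(x,y)·p(q)`, and these lower bounds add up to `-∑_q p(q) = -1`.
So the terms with `p(q|x,y) < p(q)` that are discarded sum to at least `-1`.
-/

open Finset Real

lemma neg_exp_neg_one_le_mul_log {x : ℝ} (hx : 0 ≤ x) : -exp (-1) ≤ x * log x := by
  rcases hx.eq_or_lt with rfl | hx
  · simp [(exp_pos _).le]
  have h := log_le_sub_one_of_pos (show 0 < (x * exp 1)⁻¹ by positivity)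
  rw [log_inv, log_mul hx.ne' (exp_pos 1).ne', log_exp, mul_inv, ← exp_neg] at h
  have hxlog := mul_le_mul_of_nonneg_left (show -log x ≤ x⁻¹ * exp (-1) by linarith) hx.le
  rw [← mul_assoc, mul_inv_cancel₀ hx.ne', one_mul] at hxlog
  linarith

lemma neg_le_mul_logb_div {b c : ℝ} (hb : 0 ≤ b) (hc : 0 ≤ c) : -c ≤ b * logb 2 (b / c) := by
  rcases hc.eq_or_lt with rfl | hc
  · simp
  have hlog2 : 0 < log 2 := log_pos one_lt_two
  have hexp : exp (-1) ≤ log 2 := by linarith [exp_neg_one_lt_half, log_two_gt_d9]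
  have hmul := neg_exp_neg_one_le_mul_log (div_nonneg hb hc.le)
  calc -c ≤ c * (-exp (-1)) / log 2 := by
        rw [le_div_iff₀ hlog2]; nlinarith
    _ ≤ c * (b / c * log (b / c)) / log 2 := by gcongr
    _ = b * logb 2 (b / c) := by rw [logb]; field_simp

lemma ite_and_sub_le_ite {P R : Prop} [Decidable P] [Decidable R] {s t : ℝ} (hs : 0 ≤ s)
    (ht : P → -s ≤ t) : (if P ∧ R then t else 0) - s ≤ if P then t else 0 := by
  by_cases hP : P <;> by_cases hR : R <;> simp [hP, hR, hs, ht]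

theorem mutual_info_ge_positive_part_general {Q X Y : Type*} [Fintype Q] [Fintype X] [Fintype Y]
    (μ : X → Y → ℝ) (hμ0 : ∀ x y, 0 ≤ μ x y) (hμ1 : ∑ x : X, ∑ y : Y, μ x y = 1)
    (p : Q → X → Y → ℝ) (hp0 : ∀ q x y, 0 ≤ p q x y)
    (hp1 : ∀ x y, ∑ q : Q, p q x y = 1)
    (pq : Q → ℝ) (hpq : ∀ q, pq q = ∑ x : X, ∑ y : Y, μ x y * p q x y)
    (I : ℝ)
    (hI : I = ∑ q : Q, ∑ x : X, ∑ y : Y,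
        if 0 < μ x y * p q x y then
          μ x y * p q x y * Real.logb 2 (p q x y / pq q)
        else 0) :
    I ≥ (∑ q : Q, ∑ x : X, ∑ y : Y,
        if 0 < μ x y * p q x y ∧ pq q ≤ p q x y then
          μ x y * p q x y * Real.logb 2 (p q x y / pq q)
        else 0) - 1 := by
  have hpq0 (q : Q) : 0 ≤ pq q :=
    hpq q ▸ sum_nonneg fun x _ => sum_nonneg fun y _ => mul_nonneg (hμ0 x y) (hp0 q x y)
  have hpq1 : ∑ q, pq q = 1 := by
    simp_rw [hpq, sum_comm (γ := Q), ← mul_sum, hp1, mul_one, hμ1]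
  have hmass : ∑ q : Q, ∑ x : X, ∑ y : Y, μ x y * pq q = 1 := by
    simp_rw [← sum_mul, hμ1, one_mul, hpq1]
  have hterm (q : Q) (x : X) (y : Y) :
      -(μ x y * pq q) ≤ μ x y * p q x y * logb 2 (p q x y / pq q) := by
    rw [mul_assoc, ← mul_neg]
    exact mul_le_mul_of_nonneg_left (neg_le_mul_logb_div (hp0 q x y) (hpq0 q)) (hμ0 x y)
  rw [hI, ← hmass, ge_iff_le, ← sum_sub_distrib]
  refine sum_le_sum fun q _ => ?_
  rw [← sum_sub_distrib]
  refine sum_le_sum fun x _ => ?_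
  rw [← sum_sub_distrib]
  exact sum_le_sum fun y _ =>
    ite_and_sub_le_ite (mul_nonneg (hμ0 x y) (hpq0 q)) fun _ => hterm q x y

/-- Discarding the negative terms of the pointwise mutual information
expansion of `I(XY;Q)` increases it by at most one bit:
`I(XY;Q) ≥ (∑ over (q,x,y) with p(q,x,y) > 0 and p(q|x,y) ≥ p(q) of
p(q,x,y)·log₂(p(q|x,y)/p(q))) − 1`. -/
theorem mutual_info_ge_positive_part {Q X Y : Type*} [Fintype Q] [Fintype X] [Fintype Y]
    [Nonempty Q] [Nonempty X] [Nonempty Y]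
    (μ : X → Y → ℝ) (hμ0 : ∀ x y, 0 ≤ μ x y) (hμ1 : ∑ x : X, ∑ y : Y, μ x y = 1)
    (p : Q → X → Y → ℝ) (hp0 : ∀ q x y, 0 ≤ p q x y)
    (hp1 : ∀ x y, ∑ q : Q, p q x y = 1)
    (pq : Q → ℝ) (hpq : ∀ q, pq q = ∑ x : X, ∑ y : Y, μ x y * p q x y)
    (I : ℝ)
    (hI : I = ∑ q : Q, ∑ x : X, ∑ y : Y,
        if 0 < μ x y * p q x y then
          μ x y * p q x y * Real.logb 2 (p q x y / pq q)
        else 0) :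
    I ≥ (∑ q : Q, ∑ x : X, ∑ y : Y,
        if 0 < μ x y * p q x y ∧ pq q ≤ p q x y then
          μ x y * p q x y * Real.logb 2 (p q x y / pq q)
        else 0) - 1 :=
  mutual_info_ge_positive_part_general μ hμ0 hμ1 p hp0 hp1 pq hpq I hI
end

section
/- Let X, Y, Z be finite nonempty types, Q a finite nonempty type, μ a probability mass function on X × Y, and let α : Q × X → ℝ≥0, β : Q × Y → ℝ≥0 be such that p(q|x,y) := α(q,x)·β(q,y) satisfies Σ_q p(q|x,y) = 1 for all (x,y). For a tile t = (X_t, Y_t, z_t) define σ_{q,t} = min_{x∈X_t} α(q,x) − max_{x'∉X_t} α(q,x') and τ_{q,t} = min_{y∈Y_t} β(q,y) − max_{y'∉Y_t} β(q,y') (maxima over empty sets are 0); fix an output map q ↦ z_q and let T_q = { t : σ_{q,t} > 0, τ_{q,t} > 0, z_t = z_q } and ω_{q,t} = σ_{q,t}·τ_{q,t} for t ∈ T_q. Let p(q) = Σ_{(x,y)} μ(x,y) p(q|x,y), let I = Σ_{(q,x,y): μ(x,y)p(q|x,y)>0} μ(x,y) p(q|x,y) log₂( p(q|x,y)/p(q)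 ), let δ ∈ (0,1], Δ = (I+1)/δ, and θ_q = p(q)·2^Δ. For t ∈ T_q put α̂(q,t) = min_{x∈X_t} α(q,x) and β̂(q,t) = min_{y∈Y_t} β(q,y). Then Σ over pairs (q, t) with t ∈ T_q and α̂(q,t)·β̂(q,t) ≥ θ_q of ω_{q,t} · ( Σ_{(x,y)∈t} μ(x,y) ) ≤ δ. -/
/-!
For fixed `q`, the positive slice widths `σ_{q,S}` of the sets `S ∋ x` are the lengths of
disjoint subintervals of `(0, α(q,x)]`: a level `c` in the gap of `S` recovers
`S = {x | c ≤ α(q,x)}`. Hence the tiles in `T_q` containing `(x,y)` carry total weight at most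
`α(q,x) β(q,y) = p(q|x,y)`, and a bad tile containing `(x,y)` forces
`p(q|x,y) ≥ α̂ β̂ ≥ θ_q`. The bad mass is thus at most the joint mass of the pairs where the
information density `log₂ (p(q|x,y)/p(q))` is at least `Δ`. Since `r log₂ r ≥ -1/(e ln 2) > -1`,
Markov's inequality for the information density bounds `Δ` times that mass by `I + 1 = δ Δ`.
-/

open Finset Real

open MeasureTheory in
lemma sum_sub_le_of_pairwiseDisjoint_Ioc {ι : Type*} (s : Finset ι) {a b : ι → ℝ} {m M : ℝ}
    (hmM : m ≤ M) (hma : ∀ i ∈ s, m ≤ a i) (hab : ∀ i ∈ s, a i ≤ b i) (hbM : ∀ i ∈ s, b i ≤ M)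
    (hdisj : (s : Set ι).PairwiseDisjoint fun i => Set.Ioc (a i) (b i)) :
    ∑ i ∈ s, (b i - a i) ≤ M - m := by
  rw [← ENNReal.ofReal_le_ofReal_iff (sub_nonneg.2 hmM)]
  calc ENNReal.ofReal (∑ i ∈ s, (b i - a i))
      = ∑ i ∈ s, volume (Set.Ioc (a i) (b i)) := by
        rw [ENNReal.ofReal_sum_of_nonneg fun i hi => sub_nonneg.2 (hab i hi)]
        simp only [Real.volume_Ioc]
    _ = volume (⋃ i ∈ s, Set.Ioc (a i) (b i)) :=
        (measure_biUnion_finset hdisj fun i _ => measurableSet_Ioc).symm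
    _ ≤ volume (Set.Ioc m M) :=
        measure_mono <|
          Set.iUnion₂_subset fun i hi => Set.Ioc_subset_Ioc (hma i hi) (hbM i hi)
    _ = ENNReal.ofReal (M - m) := Real.volume_Ioc

lemma ciInf_le_of_mem {X : Type*} (f : X → ℝ) {S : Finset X} {x : X} (hx : x ∈ S) :
    (⨅ x' : S, f x') ≤ f x :=
  ciInf_le (Finite.bddBelow_range _) (⟨x, hx⟩ : S)

section Slicing

variable {X : Type*} [Fintype X] [DecidableEq X]

/-- For `S = univ` the supremum is over an empty type, hence `0` on `ℝ`: the paper's convention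
for empty maxima. -/
noncomputable def sliceGap (f : X → ℝ) (S : Finset X) : ℝ :=
  (⨅ x : S, f x) - ⨆ x : (Sᶜ : Finset X), f x

lemma le_ciSup_of_notMem (f : X → ℝ) {S : Finset X} {x : X} (hx : x ∉ S) :
    f x ≤ ⨆ x' : (Sᶜ : Finset X), f x' :=
  le_ciSup (f := fun x' : (Sᶜ : Finset X) => f x') (Finite.bddAbove_range _) ⟨x, mem_compl.2 hx⟩

lemma sum_sliceGap_le {f : X → ℝ} (hf : ∀ x, 0 ≤ f x) (x : X) :
    ∑ S ∈ univ.filter (fun S => 0 < sliceGap f S ∧ x ∈ S), sliceGap f S ≤ f x := by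
  have hlevel : ∀ S : Finset X, ∀ c ∈ Set.Ioc (⨆ x' : (Sᶜ : Finset X), f x') (⨅ x' : S, f x'),
      S = univ.filter (fun x' => c ≤ f x') := by
    intro S c ⟨hsup, hinf⟩
    ext x'
    simp only [mem_filter, mem_univ, true_and]
    refine ⟨fun hx' => hinf.trans (ciInf_le_of_mem f hx'), fun hc => ?_⟩
    by_contra hx'
    linarith [le_ciSup_of_notMem f hx']
  have hsum := sum_sub_le_of_pairwiseDisjoint_Ioc (univ.filter fun S => 0 < sliceGap f S ∧ x ∈ S)
    (a := fun S => ⨆ x' : (Sᶜ : Finset X), f x') (b := fun S => ⨅ x' : S, f x') (hf x)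
    (fun S _ => Real.iSup_nonneg fun x' => hf x')
    (fun S hS => (sub_pos.1 (mem_filter.1 hS).2.1).le)
    (fun S hS => ciInf_le_of_mem f (mem_filter.1 hS).2.2)
    (fun S _ S' _ hne => Set.disjoint_left.2 fun c hc hc' =>
      hne ((hlevel S c hc).trans (hlevel S' c hc').symm))
  rwa [sub_zero] at hsum

variable {Y Z : Type*} [Fintype Y] [DecidableEq Y]

lemma sum_mul_sum_ite_mem_eq (s : Finset (Finset X × Finset Y × Z))
    (ω : Finset X × Finset Y × Z → ℝ) (μ : X → Y → ℝ) :
    ∑ t ∈ s, ω t * (∑ x, ∑ y, if x ∈ t.1 ∧ y ∈ t.2.1 then μ x y else 0) =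
      ∑ x, ∑ y, μ x y * ∑ t ∈ s.filter (fun t => x ∈ t.1 ∧ y ∈ t.2.1), ω t := by
  simp only [mul_sum, sum_filter, mul_ite, mul_zero]
  rw [sum_comm]
  refine sum_congr rfl fun x _ => ?_
  rw [sum_comm]
  simp only [mul_comm]

variable [Fintype Z] [DecidableEq Z]

lemma sum_sliceGap_mul_sliceGap_le {f : X → ℝ} {g : Y → ℝ} (hf : ∀ x, 0 ≤ f x)
    (hg : ∀ y, 0 ≤ g y) (z₀ : Z) (x : X) (y : Y) :
    ∑ t ∈ univ.filter (fun t : Finset X × Finset Y × Z =>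
        (0 < sliceGap f t.1 ∧ 0 < sliceGap g t.2.1 ∧ t.2.2 = z₀) ∧ x ∈ t.1 ∧ y ∈ t.2.1),
      sliceGap f t.1 * sliceGap g t.2.1 ≤ f x * g y := by
  have hprod : univ.filter (fun t : Finset X × Finset Y × Z =>
        (0 < sliceGap f t.1 ∧ 0 < sliceGap g t.2.1 ∧ t.2.2 = z₀) ∧ x ∈ t.1 ∧ y ∈ t.2.1) =
      univ.filter (fun S => 0 < sliceGap f S ∧ x ∈ S) ×ˢ
        univ.filter (fun T => 0 < sliceGap g T ∧ y ∈ T) ×ˢ {z₀} := by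
    ext ⟨S, T, c⟩
    simp only [mem_filter, mem_univ, true_and, mem_product, mem_singleton]
    tauto
  rw [hprod, sum_product]
  simp only [sum_product, sum_singleton]
  rw [← sum_mul_sum]
  exact mul_le_mul (sum_sliceGap_le hf x) (sum_sliceGap_le hg y)
    (sum_nonneg fun T hT => (mem_filter.1 hT).2.1.le) (hf x)

lemma sum_sliceGap_mul_sliceGap_le_ite {f : X → ℝ} {g : Y → ℝ}
    (hf : ∀ x, 0 ≤ f x) (hg : ∀ y, 0 ≤ g y) (z₀ : Z) (θ : ℝ) (x : X) (y : Y) :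
    ∑ t ∈ univ.filter (fun t : Finset X × Finset Y × Z =>
        ((0 < sliceGap f t.1 ∧ 0 < sliceGap g t.2.1 ∧ t.2.2 = z₀) ∧
          θ ≤ (⨅ x' : t.1, f x') * ⨅ y' : t.2.1, g y') ∧ x ∈ t.1 ∧ y ∈ t.2.1),
      sliceGap f t.1 * sliceGap g t.2.1 ≤ if θ ≤ f x * g y then f x * g y else 0 := by
  split_ifs with hθ
  · refine (sum_le_sum_of_subset_of_nonneg ?_ fun t ht _ => ?_).trans
      (sum_sliceGap_mul_sliceGap_le hf hg z₀ x y)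
    · intro t
      simp only [mem_filter, mem_univ, true_and]
      exact fun ht => ⟨ht.1.1, ht.2⟩
    · obtain ⟨⟨hσ, hτ, -⟩, -⟩ := (mem_filter.1 ht).2
      exact (mul_pos hσ hτ).le
  · refine (sum_eq_zero fun t ht => absurd ?_ hθ).le
    obtain ⟨⟨-, hθt⟩, hx, hy⟩ := (mem_filter.1 ht).2
    exact hθt.trans (mul_le_mul (ciInf_le_of_mem f hx) (ciInf_le_of_mem g hy)
      (Real.iInf_nonneg fun y' => hg y') (hf x))

lemma sum_tile_mass_le {Q : Type*} [Fintype Q] {μ : X → Y → ℝ} (hμ0 : ∀ x y, 0 ≤ μ x y)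
    {α : Q → X → ℝ} {β : Q → Y → ℝ} (hα : ∀ q x, 0 ≤ α q x) (hβ : ∀ q y, 0 ≤ β q y)
    (z : Q → Z) (θ : Q → ℝ) :
    ∑ q, ∑ t ∈ univ.filter (fun t : Finset X × Finset Y × Z =>
        (0 < sliceGap (α q) t.1 ∧ 0 < sliceGap (β q) t.2.1 ∧ t.2.2 = z q) ∧
          θ q ≤ (⨅ x : t.1, α q x) * ⨅ y : t.2.1, β q y),
      sliceGap (α q) t.1 * sliceGap (β q) t.2.1 *
        (∑ x, ∑ y, if x ∈ t.1 ∧ y ∈ t.2.1 then μ x y else 0) ≤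
      ∑ q, ∑ x, ∑ y, μ x y * if θ q ≤ α q x * β q y then α q x * β q y else 0 := by
  simp only [sum_mul_sum_ite_mem_eq, filter_filter]
  gcongr with q _ x _ y _
  · exact hμ0 x y
  · exact sum_sliceGap_mul_sliceGap_le_ite (hα q) (hβ q) (z q) _ x y

end Slicing

lemma neg_inv_exp_mul_log_two_le_mul_logb {r : ℝ} (hr : 0 ≤ r) :
    -(exp 1 * log 2)⁻¹ ≤ r * logb 2 r := by
  rcases hr.eq_or_lt with rfl | hr
  · simp only [zero_mul, Left.neg_nonpos_iff, inv_nonneg]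
    exact mul_nonneg (exp_pos 1).le (log_nonneg one_le_two)
  -- `exp (u - 1) ≥ u` at `u = -log r` gives `-r log r ≤ 1/e`
  have hexp : -log r ≤ exp (-log r - 1) := by linarith [add_one_le_exp (-log r - 1)]
  have hmul : r * -log r ≤ (exp 1)⁻¹ := by
    rw [exp_sub, exp_neg, exp_log hr] at hexp
    calc r * -log r ≤ r * (r⁻¹ / exp 1) := mul_le_mul_of_nonneg_left hexp hr.le
      _ = (exp 1)⁻¹ := by field_simp
  rw [neg_le]
  calc -(r * logb 2 r) = r * -log r * (log 2)⁻¹ := by rw [logb]; ring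
    _ ≤ (exp 1)⁻¹ * (log 2)⁻¹ := by gcongr
    _ = (exp 1 * log 2)⁻¹ := (mul_inv _ _).symm

lemma inv_exp_mul_log_two_lt_one : (exp 1 * log 2)⁻¹ < 1 :=
  inv_lt_one_of_one_lt₀ (by nlinarith [exp_one_gt_d9, log_two_gt_d9])

lemma mul_ite_le_ite_mul_logb_add {ν r Δ : ℝ} (hν : 0 ≤ ν) (hr : 0 ≤ r) {P : Prop} [Decidable P]
    (hP : P → 0 < ν * r → Δ ≤ logb 2 r) :
    Δ * (if P then ν * r else 0) ≤
      (if 0 < ν * r then ν * r * logb 2 r else 0) + ν * (exp 1 * log 2)⁻¹ := by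
  have hc : 0 ≤ ν * (exp 1 * log 2)⁻¹ :=
    mul_nonneg hν (inv_nonneg.2 (mul_nonneg (exp_pos 1).le (log_nonneg one_le_two)))
  rcases (mul_nonneg hν hr).eq_or_lt with hzero | hpos
  · simp only [← hzero, lt_irrefl, if_false, ite_self, mul_zero, zero_add, hc]
  rw [if_pos hpos]
  split_ifs with hp
  · nlinarith [mul_le_mul_of_nonneg_left (hP hp hpos) hpos.le]
  · nlinarith [mul_le_mul_of_nonneg_left (neg_inv_exp_mul_log_two_le_mul_logb hr) hν]

lemma mul_sum_ite_le_sum_mul_logb_add {ι : Type*} [Fintype ι] {ν r : ι → ℝ}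
    (hν : ∀ i, 0 ≤ ν i) (hν1 : ∑ i, ν i = 1) (hr : ∀ i, 0 ≤ r i) (P : ι → Prop)
    [DecidablePred P] {Δ : ℝ} (hP : ∀ i, P i → 0 < ν i * r i → Δ ≤ logb 2 (r i)) :
    Δ * ∑ i, (if P i then ν i * r i else 0) ≤
      (∑ i, if 0 < ν i * r i then ν i * r i * logb 2 (r i) else 0) + (exp 1 * log 2)⁻¹ := by
  calc Δ * ∑ i, (if P i then ν i * r i else 0)
      ≤ ∑ i, ((if 0 < ν i * r i then ν i * r i * logb 2 (r i) else 0) +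
          ν i * (exp 1 * log 2)⁻¹) := by
        rw [mul_sum]
        exact sum_le_sum fun i _ => mul_ite_le_ite_mul_logb_add (hν i) (hr i) (hP i)
    _ = _ := by rw [sum_add_distrib, ← sum_mul, hν1, one_mul]

lemma sum_ite_le_of_div_le_logb {ι : Type*} [Fintype ι] {w ν r : ι → ℝ}
    (hν : ∀ i, 0 ≤ ν i) (hν1 : ∑ i, ν i = 1) (hr : ∀ i, 0 ≤ r i) (hw : ∀ i, w i = ν i * r i)
    (P : ι → Prop) [DecidablePred P] {δ : ℝ} (hδ : 0 < δ)
    (hP : ∀ i, P i → 0 < w i →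
      ((∑ j, if 0 < w j then w j * logb 2 (r j) else 0) + 1) / δ ≤ logb 2 (r i)) :
    ∑ i, (if P i then w i else 0) ≤ δ := by
  simp only [hw] at hP ⊢
  set I := ∑ j, if 0 < ν j * r j then ν j * r j * logb 2 (r j) else 0
  have hc := inv_exp_mul_log_two_lt_one
  have hI : -(exp 1 * log 2)⁻¹ ≤ I := by
    have h0 := mul_sum_ite_le_sum_mul_logb_add hν hν1 hr (fun _ => False) (Δ := 0) (by simp)
    rw [zero_mul] at h0
    linarith
  have hΔ : 0 < (I + 1) / δ := div_pos (by linarith) hδ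
  refine le_of_mul_le_mul_left ?_ hΔ
  rw [div_mul_cancel₀ _ hδ.ne']
  linarith [mul_sum_ite_le_sum_mul_logb_add hν hν1 hr P hP]

section Channel

variable {X Y Q : Type*} [Fintype X] [Fintype Y] {μ : X → Y → ℝ}
  {p : Q → X → Y → ℝ} {pq : Q → ℝ}

lemma mul_le_output_prob (hμ0 : ∀ x y, 0 ≤ μ x y) (hp0 : ∀ q x y, 0 ≤ p q x y)
    (hpq : ∀ q, pq q = ∑ x, ∑ y, μ x y * p q x y) (q : Q) (x : X) (y : Y) :
    μ x y * p q x y ≤ pq q := by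
  have hmass : ∀ x y, 0 ≤ μ x y * p q x y := fun x y => mul_nonneg (hμ0 x y) (hp0 q x y)
  rw [hpq]
  calc μ x y * p q x y ≤ ∑ y', μ x y' * p q x y' :=
        single_le_sum (fun y' _ => hmass x y') (mem_univ y)
    _ ≤ _ := single_le_sum (fun x' _ => sum_nonneg fun y' _ => hmass x' y') (mem_univ x)

variable [Fintype Q]

lemma sum_output_prob_eq_one (hμ1 : ∑ x, ∑ y, μ x y = 1) (hp1 : ∀ x y, ∑ q, p q x y = 1)
    (hpq : ∀ q, pq q = ∑ x, ∑ y, μ x y * p q x y) :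
    ∑ q, pq q = 1 := by
  simp only [hpq]
  rw [sum_comm]
  refine (sum_congr rfl fun x _ => ?_).trans hμ1
  rw [sum_comm]
  exact sum_congr rfl fun y _ => by rw [← mul_sum, hp1, mul_one]

lemma joint_mass_of_large_density_le (hμ0 : ∀ x y, 0 ≤ μ x y) (hμ1 : ∑ x, ∑ y, μ x y = 1)
    (hp0 : ∀ q x y, 0 ≤ p q x y) (hp1 : ∀ x y, ∑ q, p q x y = 1)
    (hpq : ∀ q, pq q = ∑ x, ∑ y, μ x y * p q x y) {I δ : ℝ} (hδ : 0 < δ)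
    (hI : I = ∑ q, ∑ x, ∑ y,
      if 0 < μ x y * p q x y then μ x y * p q x y * logb 2 (p q x y / pq q) else 0) :
    ∑ q, ∑ x, ∑ y, μ x y * (if pq q * (2 : ℝ) ^ ((I + 1) / δ) ≤ p q x y then p q x y else 0)
      ≤ δ := by
  have hpq0 : ∀ q, 0 ≤ pq q := fun q =>
    hpq q ▸ sum_nonneg fun x _ => sum_nonneg fun y _ => mul_nonneg (hμ0 x y) (hp0 q x y)
  have hmass_le := mul_le_output_prob hμ0 hp0 hpq
  calc _ = ∑ i : Q × X × Y, if pq i.1 * (2 : ℝ) ^ ((I + 1) / δ) ≤ p i.1 i.2.1 i.2.2 then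
          μ i.2.1 i.2.2 * p i.1 i.2.1 i.2.2 else 0 := by
        simp only [Fintype.sum_prod_type, mul_ite, mul_zero]
    _ ≤ δ := by
      refine sum_ite_le_of_div_le_logb (ν := fun i => μ i.2.1 i.2.2 * pq i.1)
        (r := fun i => p i.1 i.2.1 i.2.2 / pq i.1) (fun i => mul_nonneg (hμ0 ..) (hpq0 _)) ?_
        (fun i => div_nonneg (hp0 ..) (hpq0 _)) ?_ _ hδ ?_
      · simp only [Fintype.sum_prod_type, ← sum_mul, hμ1, one_mul,
          sum_output_prob_eq_one hμ1 hp1 hpq]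
      · rintro ⟨q, x, y⟩
        dsimp only
        -- where `pq q = 0` the ratio is junk, but the mass `μ x y * p q x y ≤ pq q` vanishes
        rcases eq_or_ne (pq q) 0 with h | h
        · rw [h, mul_zero, zero_mul]
          exact le_antisymm (h ▸ hmass_le q x y) (mul_nonneg (hμ0 x y) (hp0 q x y))
        · field_simp
      · rintro ⟨q, x, y⟩ hlarge hpos
        dsimp only at hlarge hpos ⊢
        have hpq_pos : 0 < pq q := hpos.trans_le (hmass_le q x y)
        have hp_pos : 0 < p q x y := pos_of_mul_pos_right hpos (hμ0 x y)
        simp only [Fintype.sum_prod_type, ← hI]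
        rw [le_logb_iff_rpow_le one_lt_two (div_pos hp_pos hpq_pos), le_div_iff₀ hpq_pos,
          mul_comm]
        exact hlarge

end Channel

theorem bad_set_mass_le_general {X Y Z Q : Type*}
    [Fintype X] [Fintype Y] [Fintype Z] [Fintype Q]
    [DecidableEq X] [DecidableEq Y] [DecidableEq Z]
    (μ : X → Y → ℝ) (hμ0 : ∀ x y, 0 ≤ μ x y) (hμ1 : ∑ x : X, ∑ y : Y, μ x y = 1)
    (α : Q → X → ℝ) (β : Q → Y → ℝ)
    (hα : ∀ q x, 0 ≤ α q x) (hβ : ∀ q y, 0 ≤ β q y)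
    (hp1 : ∀ x y, ∑ q : Q, α q x * β q y = 1)
    (z : Q → Z)
    (σ τ ω : Q → Finset X × Finset Y × Z → ℝ)
    (hσ : ∀ q (t : Finset X × Finset Y × Z),
      σ q t = (⨅ x : t.1, α q x.1) - (⨆ x : (t.1ᶜ : Finset X), α q x.1))
    (hτ : ∀ q (t : Finset X × Finset Y × Z),
      τ q t = (⨅ y : t.2.1, β q y.1) - (⨆ y : (t.2.1ᶜ : Finset Y), β q y.1))
    (hω : ∀ q t, ω q t = σ q t * τ q t)
    (pq : Q → ℝ) (hpq : ∀ q, pq q = ∑ x : X, ∑ y : Y, μ x y * (α q x * β q y))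
    (I : ℝ)
    (hI : I = ∑ q : Q, ∑ x : X, ∑ y : Y,
        if 0 < μ x y * (α q x * β q y) then
          μ x y * (α q x * β q y) * Real.logb 2 ((α q x * β q y) / pq q)
        else 0)
    (δ : ℝ) (hδ0 : 0 < δ)
    (Δ : ℝ) (hΔ : Δ = (I + 1) / δ)
    (θ : Q → ℝ) (hθ : ∀ q, θ q = pq q * (2 : ℝ) ^ Δ)
    (αhat βhat : Q → Finset X × Finset Y × Z → ℝ)
    (hαhat : ∀ q (t : Finset X × Finset Y × Z), αhat q t = ⨅ x : t.1, α q x.1)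
    (hβhat : ∀ q (t : Finset X × Finset Y × Z), βhat q t = ⨅ y : t.2.1, β q y.1) :
    (∑ q : Q, ∑ t ∈ Finset.univ.filter (fun t : Finset X × Finset Y × Z =>
        (0 < σ q t ∧ 0 < τ q t ∧ t.2.2 = z q) ∧ θ q ≤ αhat q t * βhat q t),
      ω q t * (∑ x : X, ∑ y : Y, if x ∈ t.1 ∧ y ∈ t.2.1 then μ x y else 0)) ≤ δ := by
  obtain rfl : σ = fun q t => sliceGap (α q) t.1 := funext₂ hσ
  obtain rfl : τ = fun q t => sliceGap (β q) t.2.1 := funext₂ hτ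
  obtain rfl : ω = fun q t => sliceGap (α q) t.1 * sliceGap (β q) t.2.1 := funext₂ hω
  obtain rfl : αhat = fun q t => ⨅ x : t.1, α q x.1 := funext₂ hαhat
  obtain rfl : βhat = fun q t => ⨅ y : t.2.1, β q y.1 := funext₂ hβhat
  obtain rfl : θ = fun q => pq q * (2 : ℝ) ^ Δ := funext hθ
  subst hΔ
  exact (sum_tile_mass_le hμ0 hα hβ z _).trans <| joint_mass_of_large_density_le
    (p := fun q x y => α q x * β q y) hμ0 hμ1 (fun q x y => mul_nonneg (hα q x) (hβ q y)) hp1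
    hpq hδ0 hI

/-- mass of the bad set: In the slicing construction for a factorized
kernel `p(q|x,y) = α(q,x)·β(q,y)` with input distribution `μ`, the total probability
mass `∑ ω_{q,t} · μ(t)` of the pairs `(q, t)` with `t ∈ T_q` and
`α̂(q,t)·β̂(q,t) ≥ θ_q = p(q)·2^Δ`, where `Δ = (I + 1)/δ`, is at most `δ`. -/
theorem bad_set_mass_le {X Y Z Q : Type*}
    [Fintype X] [Fintype Y] [Fintype Z] [Fintype Q]
    [Nonempty X] [Nonempty Y] [Nonempty Z] [Nonempty Q]
    [DecidableEq X] [DecidableEq Y] [DecidableEq Z]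
    (μ : X → Y → ℝ) (hμ0 : ∀ x y, 0 ≤ μ x y) (hμ1 : ∑ x : X, ∑ y : Y, μ x y = 1)
    (α : Q → X → ℝ) (β : Q → Y → ℝ)
    (hα : ∀ q x, 0 ≤ α q x) (hβ : ∀ q y, 0 ≤ β q y)
    (hp1 : ∀ x y, ∑ q : Q, α q x * β q y = 1)
    (z : Q → Z)
    (σ τ ω : Q → Finset X × Finset Y × Z → ℝ)
    (hσ : ∀ q (t : Finset X × Finset Y × Z),
      σ q t = (⨅ x : t.1, α q x.1) - (⨆ x : (t.1ᶜ : Finset X), α q x.1))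
    (hτ : ∀ q (t : Finset X × Finset Y × Z),
      τ q t = (⨅ y : t.2.1, β q y.1) - (⨆ y : (t.2.1ᶜ : Finset Y), β q y.1))
    (hω : ∀ q t, ω q t = σ q t * τ q t)
    (pq : Q → ℝ) (hpq : ∀ q, pq q = ∑ x : X, ∑ y : Y, μ x y * (α q x * β q y))
    (I : ℝ)
    (hI : I = ∑ q : Q, ∑ x : X, ∑ y : Y,
        if 0 < μ x y * (α q x * β q y) then
          μ x y * (α q x * β q y) * Real.logb 2 ((α q x * β q y) / pq q)
        else 0)
    (δ : ℝ) (hδ0 : 0 < δ) (hδ1 : δ ≤ 1)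
    (Δ : ℝ) (hΔ : Δ = (I + 1) / δ)
    (θ : Q → ℝ) (hθ : ∀ q, θ q = pq q * (2 : ℝ) ^ Δ)
    (αhat βhat : Q → Finset X × Finset Y × Z → ℝ)
    (hαhat : ∀ q (t : Finset X × Finset Y × Z), αhat q t = ⨅ x : t.1, α q x.1)
    (hβhat : ∀ q (t : Finset X × Finset Y × Z), βhat q t = ⨅ y : t.2.1, β q y.1) :
    (∑ q : Q, ∑ t ∈ Finset.univ.filter (fun t : Finset X × Finset Y × Z =>
        (0 < σ q t ∧ 0 < τ q t ∧ t.2.2 = z q) ∧ θ q ≤ αhat q t * βhat q t),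
      ω q t * (∑ x : X, ∑ y : Y, if x ∈ t.1 ∧ y ∈ t.2.1 then μ x y else 0)) ≤ δ :=
  bad_set_mass_le_general μ hμ0 hμ1 α β hα hβ hp1 z σ τ ω hσ hτ hω pq hpq I hI δ hδ0 Δ hΔ θ hθ αhat
    βhat hαhat hβhat
end

section
/- Let M, N be positive integers, let 0 = a_0 ≤ a_1 ≤ … ≤ a_M and 0 = b_0 ≤ b_1 ≤ … ≤ b_N be real numbers, and let θ > 0 satisfy θ ≤ a_M · b_N. Then Σ over pairs (i,j) with 1 ≤ i ≤ M, 1 ≤ j ≤ N and a_i · b_j < θ of (a_i − a_{i−1})·(b_j − b_{j−1}) ≤ θ + θ · ln( a_M · b_N / θ ), where ln denotes the natural logarithm. -/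
/-!
Cut the rectangle `[0, a_M] × [0, b_N]` into the vertical strips `[a_{i-1}, a_i] × [0, b_N]`.
In each strip, the rectangles whose top-right corner lies below the hyperbola `xy = θ` stack up
to a height `w` with `a_i w ≤ θ`, so they fit under the curve `y = min (b_N, θ / x)` on
`[a_{i-1}, a_i]`. Summing over the strips bounds the total area by the area below that curve on
`[0, a_M]`, which is `θ + θ log (a_M b_N / θ)` since `θ / b_N ≤ a_M`.
-/

open Finset Real

lemma monotoneOn_Iic_of_le_succ {α : Type*} [Preorder α] {f : ℕ → α} {n : ℕ}
    (hf : ∀ k < n, f k ≤ f (k + 1)) : MonotoneOn f (Set.Iic n) := by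
  refine monotoneOn_of_le_succ Set.ordConnected_Iic fun k _ _ hk => ?_
  rw [Order.succ_eq_add_one] at hk ⊢
  exact hf k (Nat.lt_of_succ_le hk)

lemma sum_Icc_one_eq_sum_range {M : Type*} [AddCommMonoid M] (f : ℕ → M) (n : ℕ) :
    ∑ i ∈ Icc 1 n, f i = ∑ i ∈ range n, f (i + 1) := by
  rw [← Ico_add_one_right_eq_Icc, range_eq_Ico, sum_Ico_add' f 0 n 1]

lemma exists_sum_range_ite_sub_eq {b : ℕ → ℝ} {N : ℕ} (hb : ∀ j < N, b j ≤ b (j + 1))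
    {p : ℝ → Prop} [DecidablePred p] (hp : Antitone p) :
    ∃ J ≤ N, (J = 0 ∨ p (b J)) ∧
      ∑ j ∈ range N, (if p (b (j + 1)) then b (j + 1) - b j else 0) = b J - b 0 := by
  induction N with
  | zero => exact ⟨0, le_rfl, .inl rfl, by simp⟩
  | succ N ih =>
    rw [sum_range_succ]
    by_cases hN : p (b (N + 1))
    · have hmono := monotoneOn_Iic_of_le_succ hb
      have hp_lt : ∀ j ∈ range N, p (b (j + 1)) := fun j hj => by
        rw [mem_range] at hj
        exact hp (hmono (Set.mem_Iic.2 (by omega)) Set.self_mem_Iic (by omega)) hN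
      refine ⟨N + 1, le_rfl, .inr hN, ?_⟩
      rw [sum_congr rfl fun j hj => if_pos (hp_lt j hj), sum_range_sub, if_pos hN]
      ring
    · obtain ⟨J, hJN, hJ, hsum⟩ := ih fun j hj => hb j (by omega)
      exact ⟨J, by omega, hJ, by rw [hsum, if_neg hN, add_zero]⟩

/-- `∫₀ˣ min B (θ / t) dt`: the area of the part of `[0, x] × [0, B]` below the hyperbola
`xy = θ`. -/
noncomputable def hyperbolaArea (B θ x : ℝ) : ℝ :=
  if x ≤ θ / B then B * x else θ + θ * log (x * B / θ)

section hyperbolaArea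

variable {B θ u v w : ℝ}

lemma hyperbolaArea_of_le_div (hv : v ≤ θ / B) : hyperbolaArea B θ v = B * v :=
  if_pos hv

lemma hyperbolaArea_of_div_le (hB : 0 < B) (hθ : 0 < θ) (hv : θ / B ≤ v) :
    hyperbolaArea B θ v = θ + θ * log (v * B / θ) := by
  rcases hv.lt_or_eq with hv | rfl
  · exact if_neg hv.not_ge
  · rw [hyperbolaArea_of_le_div le_rfl]
    field_simp
    simp

lemma sub_mul_le_hyperbolaArea_sub_of_le_div (huv : u ≤ v) (hv : v ≤ θ / B) (hw : w ≤ B) :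
    (v - u) * w ≤ hyperbolaArea B θ v - hyperbolaArea B θ u := by
  rw [hyperbolaArea_of_le_div hv, hyperbolaArea_of_le_div (huv.trans hv)]
  nlinarith

lemma sub_mul_le_hyperbolaArea_sub_of_div_le (hB : 0 < B) (hθ : 0 < θ) (hu : θ / B ≤ u)
    (huv : u ≤ v) (hvw : v * w ≤ θ) :
    (v - u) * w ≤ hyperbolaArea B θ v - hyperbolaArea B θ u := by
  have hu0 : 0 < u := (div_pos hθ hB).trans_le hu
  have hv0 : 0 < v := hu0.trans_le huv
  rw [hyperbolaArea_of_div_le hB hθ (hu.trans huv), hyperbolaArea_of_div_le hB hθ hu]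
  have hlog : log (v * B / θ) - log (u * B / θ) = log (v / u) := by
    rw [← log_div (by positivity) (by positivity)]
    congr 1
    field_simp
  calc (v - u) * w ≤ (v - u) * (θ / v) :=
        mul_le_mul_of_nonneg_left ((le_div_iff₀' hv0).2 hvw) (sub_nonneg.2 huv)
    _ = θ * (1 - (v / u)⁻¹) := by field_simp
    _ ≤ θ * log (v / u) :=
        mul_le_mul_of_nonneg_left (one_sub_inv_le_log_of_pos (by positivity)) hθ.le
    _ = _ := by rw [← hlog]; ring

lemma sub_mul_le_hyperbolaArea_sub (hB : 0 < B) (hθ : 0 < θ) (huv : u ≤ v) (hw : w ≤ B)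
    (hvw : v * w ≤ θ) :
    (v - u) * w ≤ hyperbolaArea B θ v - hyperbolaArea B θ u := by
  rcases le_total v (θ / B) with hv | hv
  · exact sub_mul_le_hyperbolaArea_sub_of_le_div huv hv hw
  rcases le_total u (θ / B) with hu | hu
  · have hleft := sub_mul_le_hyperbolaArea_sub_of_le_div hu le_rfl hw
    have hright := sub_mul_le_hyperbolaArea_sub_of_div_le hB hθ le_rfl hv hvw
    linarith
  · exact sub_mul_le_hyperbolaArea_sub_of_div_le hB hθ hu huv hvw

lemma sum_range_ite_le_hyperbolaArea_sub {b : ℕ → ℝ} {N : ℕ} (hb : ∀ j < N, b j ≤ b (j + 1))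
    (hb0 : b 0 = 0) (hbN : 0 < b N) (hθ : 0 < θ) (huv : u ≤ v) (hv : 0 ≤ v) :
    ∑ j ∈ range N, (if v * b (j + 1) < θ then (v - u) * (b (j + 1) - b j) else 0)
      ≤ hyperbolaArea (b N) θ v - hyperbolaArea (b N) θ u := by
  have hp : Antitone fun y => v * y < θ := fun y z hyz hz =>
    (mul_le_mul_of_nonneg_left hyz hv).trans_lt hz
  obtain ⟨J, hJN, hJ, hsum⟩ := exists_sum_range_ite_sub_eq hb hp
  have hvJ : v * b J ≤ θ := by
    rcases hJ with rfl | hJ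
    · simpa [hb0] using hθ.le
    · exact hJ.le
  have hbJ : b J ≤ b N := monotoneOn_Iic_of_le_succ hb (Set.mem_Iic.2 hJN) Set.self_mem_Iic hJN
  rw [hb0, sub_zero] at hsum
  calc _ = (v - u) * b J := by rw [← hsum, mul_sum]; simp only [mul_ite, mul_zero]
    _ ≤ _ := sub_mul_le_hyperbolaArea_sub hbN hθ huv hbJ hvJ

end hyperbolaArea

theorem area_under_hyperbola_general (M N : ℕ)
    (a b : ℕ → ℝ)
    (ha0 : a 0 = 0) (hb0 : b 0 = 0)
    (hamono : ∀ i < M, a i ≤ a (i + 1))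
    (hbmono : ∀ j < N, b j ≤ b (j + 1))
    (θ : ℝ) (hθ0 : 0 < θ) (hθ : θ ≤ a M * b N) :
    (∑ i ∈ Finset.Icc 1 M, ∑ j ∈ Finset.Icc 1 N,
        if a i * b j < θ then (a i - a (i - 1)) * (b j - b (j - 1)) else 0)
      ≤ θ + θ * Real.log (a M * b N / θ) := by
  have ha_mono := monotoneOn_Iic_of_le_succ hamono
  have ha_nonneg : ∀ i ≤ M, 0 ≤ a i := fun i hi =>
    ha0 ▸ ha_mono (Set.mem_Iic.2 (Nat.zero_le M)) (Set.mem_Iic.2 hi) (Nat.zero_le i)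
  have hbN : 0 < b N := pos_of_mul_pos_right (hθ0.trans_le hθ) (ha_nonneg M le_rfl)
  have hstrip : ∀ i ∈ range M,
      ∑ j ∈ range N, (if a (i + 1) * b (j + 1) < θ then
          (a (i + 1) - a i) * (b (j + 1) - b j) else 0)
        ≤ hyperbolaArea (b N) θ (a (i + 1)) - hyperbolaArea (b N) θ (a i) := fun i hi =>
    sum_range_ite_le_hyperbolaArea_sub hbmono hb0 hbN hθ0 (hamono i (mem_range.1 hi))
      (ha_nonneg _ (mem_range.1 hi))
  simp only [sum_Icc_one_eq_sum_range, Nat.add_sub_cancel]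
  calc _ ≤ ∑ i ∈ range M, (hyperbolaArea (b N) θ (a (i + 1)) - hyperbolaArea (b N) θ (a i)) :=
        sum_le_sum hstrip
    _ = hyperbolaArea (b N) θ (a M) := by
        rw [sum_range_sub (fun i => hyperbolaArea (b N) θ (a i)), ha0,
          hyperbolaArea_of_le_div (div_pos hθ0 hbN).le, mul_zero, sub_zero]
    _ = θ + θ * log (a M * b N / θ) :=
        hyperbolaArea_of_div_le hbN hθ0 ((div_le_iff₀ hbN).2 hθ)

/-- geometric lemma: given `0 = a₀ ≤ a₁ ≤ … ≤ a_M`,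
`0 = b₀ ≤ b₁ ≤ … ≤ b_N`, and `0 < θ ≤ a_M · b_N`, the total area of the rectangles
`R_{ij}` (with corners `(a_{i-1}, b_{j-1})`, `(a_i, b_j)`) whose top-right corner lies
strictly below the hyperbola `xy = θ` is at most `θ + θ · ln(a_M · b_N / θ)`. -/
theorem area_under_hyperbola (M N : ℕ) (hM : 0 < M) (hN : 0 < N)
    (a b : ℕ → ℝ)
    (ha0 : a 0 = 0) (hb0 : b 0 = 0)
    (hamono : ∀ i < M, a i ≤ a (i + 1))
    (hbmono : ∀ j < N, b j ≤ b (j + 1))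
    (θ : ℝ) (hθ0 : 0 < θ) (hθ : θ ≤ a M * b N) :
    (∑ i ∈ Finset.Icc 1 M, ∑ j ∈ Finset.Icc 1 N,
        if a i * b j < θ then (a i - a (i - 1)) * (b j - b (j - 1)) else 0)
      ≤ θ + θ * Real.log (a M * b N / θ) :=
  area_under_hyperbola_general M N a b ha0 hb0 hamono hbmono θ hθ0 hθ
end

section
/- Let X, Y, Q be finite nonempty types and let p be a probability mass function on X × Y × Q, with marginals and conditionals defined by the usual sums. Define (with all sums restricted to triples/pairs of positive probability, and log₂ the base-2 logarithm): I(X;Y) = Σ p(x,y) log₂( p(x,y)/(p(x)p(y)) ); I(X;Y|Q) = Σ p(x,y,q) log₂( p(x,y|q)/(p(x|q)p(y|q)) ); I(XY;Q) = Σ p(x,y,q) log₂( p(x,y,q)/(p(x,y)p(q)) ); I(X;Q|Y) = Σ p(x,y,q) log₂( p(x,q|y)/(p(x|y)p(q|y)) ); and I(Y;Q|X) = Σ p(x,y,q) log₂( p(y,q|x)/(p(y|x)p(q|x)) ). If I(X;Y|Q) ≤ I(X;Y), then I(X;Q|Y) + I(Y;Q|X) ≤ I(XY;Q). -/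
/-!
Summing the chain rule twice gives the identity
`I(X;Q|Y) + I(Y;Q|X) + I(X;Y) = I(XY;Q) + I(X;Y|Q)`,
which already holds term by term: at each triple of positive probability both sides are
`log₂ (p(x,y,q)² / (p(x,y) p(x,q) p(y,q)))`. The hypothesis `I(X;Y|Q) ≤ I(X;Y)` then turns the
identity into the inequality.
-/

open Finset Real

lemma ite_pos_mul_eq_mul {a : ℝ} (b : ℝ) (ha : 0 ≤ a) : (if 0 < a then a * b else 0) = a * b := by
  rcases ha.eq_or_lt with rfl | ha
  · simp
  · exact if_pos ha

lemma le_sum_of_nonneg {ι : Type*} [Fintype ι] {f : ι → ℝ} (hf : ∀ i, 0 ≤ f i) (i : ι) :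
    f i ≤ ∑ j, f j :=
  single_le_sum (fun j _ => hf j) (mem_univ i)

lemma le_sum_sum_of_nonneg {ι κ : Type*} [Fintype ι] [Fintype κ] {f : ι → κ → ℝ}
    (hf : ∀ i j, 0 ≤ f i j) (i : ι) (j : κ) : f i j ≤ ∑ i, ∑ j, f i j :=
  (le_sum_of_nonneg (hf i) j).trans
    (le_sum_of_nonneg (fun i => sum_nonneg fun j _ => hf i j) i)

lemma logb_info_identity {p pxy px py pq pxq pyq : ℝ} (hp : 0 < p) (hxy : 0 < pxy) (hx : 0 < px)
    (hy : 0 < py) (hq : 0 < pq) (hxq : 0 < pxq) (hyq : 0 < pyq) :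
    logb 2 ((p / py) / ((pxy / py) * (pyq / py))) + logb 2 ((p / px) / ((pxy / px) * (pxq / px)))
        + logb 2 (pxy / (px * py)) =
      logb 2 (p / (pxy * pq)) + logb 2 ((p / pq) / ((pxq / pq) * (pyq / pq))) := by
  rw [← logb_mul (by positivity) (by positivity), ← logb_mul (by positivity) (by positivity),
    ← logb_mul (by positivity) (by positivity)]
  congr 1
  field_simp

lemma mul_logb_info_identity {p pxy px py pq pxq pyq : ℝ} (hp : 0 ≤ p) (hxy : p ≤ pxy)
    (hx : p ≤ px) (hy : p ≤ py) (hq : p ≤ pq) (hxq : p ≤ pxq) (hyq : p ≤ pyq) :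
    p * logb 2 ((p / py) / ((pxy / py) * (pyq / py)))
        + p * logb 2 ((p / px) / ((pxy / px) * (pxq / px))) + p * logb 2 (pxy / (px * py)) =
      p * logb 2 (p / (pxy * pq)) + p * logb 2 ((p / pq) / ((pxq / pq) * (pyq / pq))) := by
  rcases hp.eq_or_lt with rfl | hp
  · simp
  · simp only [← mul_add]
    rw [logb_info_identity hp (hp.trans_le hxy) (hp.trans_le hx) (hp.trans_le hy)
      (hp.trans_le hq) (hp.trans_le hxq) (hp.trans_le hyq)]

theorem internal_le_external_of_refined_general {X Y Q : Type*} [Fintype X] [Fintype Y] [Fintype Q]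
    (p : X → Y → Q → ℝ) (hp0 : ∀ x y q, 0 ≤ p x y q)
    (pXY : X → Y → ℝ) (hpXY : ∀ x y, pXY x y = ∑ q : Q, p x y q)
    (pX : X → ℝ) (hpX : ∀ x, pX x = ∑ y : Y, ∑ q : Q, p x y q)
    (pY : Y → ℝ) (hpY : ∀ y, pY y = ∑ x : X, ∑ q : Q, p x y q)
    (pQ : Q → ℝ) (hpQ : ∀ q, pQ q = ∑ x : X, ∑ y : Y, p x y q)
    (pXQ : X → Q → ℝ) (hpXQ : ∀ x q, pXQ x q = ∑ y : Y, p x y q)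
    (pYQ : Y → Q → ℝ) (hpYQ : ∀ y q, pYQ y q = ∑ x : X, p x y q)
    (IXY IXYgQ IXYQ IXQgY IYQgX : ℝ)
    (hIXY : IXY = ∑ x : X, ∑ y : Y,
      if 0 < pXY x y then pXY x y * Real.logb 2 (pXY x y / (pX x * pY y)) else 0)
    (hIXYgQ : IXYgQ = ∑ x : X, ∑ y : Y, ∑ q : Q,
      if 0 < p x y q then
        p x y q * Real.logb 2 ((p x y q / pQ q) / ((pXQ x q / pQ q) * (pYQ y q / pQ q)))
      else 0)
    (hIXYQ : IXYQ = ∑ x : X, ∑ y : Y, ∑ q : Q,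
      if 0 < p x y q then
        p x y q * Real.logb 2 (p x y q / (pXY x y * pQ q))
      else 0)
    (hIXQgY : IXQgY = ∑ x : X, ∑ y : Y, ∑ q : Q,
      if 0 < p x y q then
        p x y q * Real.logb 2 ((p x y q / pY y) / ((pXY x y / pY y) * (pYQ y q / pY y)))
      else 0)
    (hIYQgX : IYQgX = ∑ x : X, ∑ y : Y, ∑ q : Q,
      if 0 < p x y q then
        p x y q * Real.logb 2 ((p x y q / pX x) / ((pXY x y / pX x) * (pXQ x q / pX x)))
      else 0)
    (hrefined : IXYgQ ≤ IXY) :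
    IXQgY + IYQgX ≤ IXYQ := by
  simp only [ite_pos_mul_eq_mul _ (hp0 _ _ _)] at hIXYgQ hIXYQ hIXQgY hIYQgX
  have hIXY' : IXY = ∑ x, ∑ y, ∑ q, p x y q * logb 2 (pXY x y / (pX x * pY y)) := by
    refine hIXY.trans (sum_congr rfl fun x _ => sum_congr rfl fun y _ => ?_)
    rw [← sum_mul, ← hpXY, ite_pos_mul_eq_mul _ (hpXY x y ▸ sum_nonneg fun q _ => hp0 x y q)]
  have identity : IXQgY + IYQgX + IXY = IXYQ + IXYgQ := by
    simp only [hIXQgY, hIYQgX, hIXY', hIXYQ, hIXYgQ, ← sum_add_distrib]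
    refine sum_congr rfl fun x _ => sum_congr rfl fun y _ => sum_congr rfl fun q _ => ?_
    exact mul_logb_info_identity (hp0 x y q)
      (hpXY x y ▸ le_sum_of_nonneg (hp0 x y) q)
      (hpX x ▸ le_sum_sum_of_nonneg (hp0 x) y q)
      (hpY y ▸ le_sum_sum_of_nonneg (fun x q => hp0 x y q) x q)
      (hpQ q ▸ le_sum_sum_of_nonneg (fun x y => hp0 x y q) x y)
      (hpXQ x q ▸ le_sum_of_nonneg (fun y => hp0 x y q) y)
      (hpYQ y q ▸ le_sum_of_nonneg (fun x => hp0 x y q) x)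
  linarith

/-- For finite random variables `X, Y, Q` with joint pmf `p`, if
`I(X;Y|Q) ≤ I(X;Y)` (the refined pseudotranscript condition), then
`I(X;Q|Y) + I(Y;Q|X) ≤ I(XY;Q)`: internal information cost is at most external
information cost. -/
theorem internal_le_external_of_refined {X Y Q : Type*} [Fintype X] [Fintype Y] [Fintype Q]
    [Nonempty X] [Nonempty Y] [Nonempty Q]
    (p : X → Y → Q → ℝ) (hp0 : ∀ x y q, 0 ≤ p x y q)
    (hp1 : ∑ x : X, ∑ y : Y, ∑ q : Q, p x y q = 1)
    (pXY : X → Y → ℝ) (hpXY : ∀ x y, pXY x y = ∑ q : Q, p x y q)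
    (pX : X → ℝ) (hpX : ∀ x, pX x = ∑ y : Y, ∑ q : Q, p x y q)
    (pY : Y → ℝ) (hpY : ∀ y, pY y = ∑ x : X, ∑ q : Q, p x y q)
    (pQ : Q → ℝ) (hpQ : ∀ q, pQ q = ∑ x : X, ∑ y : Y, p x y q)
    (pXQ : X → Q → ℝ) (hpXQ : ∀ x q, pXQ x q = ∑ y : Y, p x y q)
    (pYQ : Y → Q → ℝ) (hpYQ : ∀ y q, pYQ y q = ∑ x : X, p x y q)
    (IXY IXYgQ IXYQ IXQgY IYQgX : ℝ)
    (hIXY : IXY = ∑ x : X, ∑ y : Y,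
      if 0 < pXY x y then pXY x y * Real.logb 2 (pXY x y / (pX x * pY y)) else 0)
    (hIXYgQ : IXYgQ = ∑ x : X, ∑ y : Y, ∑ q : Q,
      if 0 < p x y q then
        p x y q * Real.logb 2 ((p x y q / pQ q) / ((pXQ x q / pQ q) * (pYQ y q / pQ q)))
      else 0)
    (hIXYQ : IXYQ = ∑ x : X, ∑ y : Y, ∑ q : Q,
      if 0 < p x y q then
        p x y q * Real.logb 2 (p x y q / (pXY x y * pQ q))
      else 0)
    (hIXQgY : IXQgY = ∑ x : X, ∑ y : Y, ∑ q : Q,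
      if 0 < p x y q then
        p x y q * Real.logb 2 ((p x y q / pY y) / ((pXY x y / pY y) * (pYQ y q / pY y)))
      else 0)
    (hIYQgX : IYQgX = ∑ x : X, ∑ y : Y, ∑ q : Q,
      if 0 < p x y q then
        p x y q * Real.logb 2 ((p x y q / pX x) / ((pXY x y / pX x) * (pXQ x q / pX x)))
      else 0)
    (hrefined : IXYgQ ≤ IXY) :
    IXQgY + IYQgX ≤ IXYQ :=
  internal_le_external_of_refined_general p hp0 pXY hpXY pX hpX pY hpY pQ hpQ pXQ hpXQ pYQ hpYQ IXY
    IXYgQ IXYQ IXQgY IYQgX hIXY hIXYgQ hIXYQ hIXQgY hIYQgX hrefined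
end
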